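/- arXiv:1803.03595 — 2 statements merged into one kernel-verified Lean document; each statement's English description precedes it below -/
import Mathlib

section
/- Let 𝔐 denote the centered Hardy–Littlewood maximal operator on ℝ^d. For 1 < q < ∞ and 1 < p < ∞, 𝔐 is bounded on the amalgam space (L^q, ℓ^p)(ℝ^d): there exists C > 0 such that ‖𝔐(f)‖_{q,p} ≤ C‖f‖_{q,p} for every locally integrable f. -/
/-!
Fix a cube `Q_k` and split `|f| = g₁ + g₂`, where `g₁` is the part of `|f|` on the `3^d` cubes
`Q_j` with `‖j - k‖_∞ ≤ 1`. The `L^q` boundedness of `𝔐` bounds `‖𝔐 g₁‖_{L^q(Q_k)}` by the sum of the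
`L^q` norms of `f` on those cubes. Balls of radius `≤ 1` centred in `Q_k` do not meet the support
of `g₂`, while a ball of radius `r > 1` centred in `Q_k` is comparable in volume to the ball of
radius `3r` around any other point of `Q_k`. With Hölder on each unit cube this gives
`𝔐 g₂ ≤ 3^d 𝔐 H` on all of `Q_k`, where `H` is the step function equal to `‖f‖_{L^q(Q_j)}` on
`Q_j`; summing over `k` in `ℓ^p` and using the `L^p` boundedness of `𝔐` on `H` concludes.

The Hardy–Littlewood maximal theorem is proved along the way: Vitali's covering lemma gives
`μ {𝔐 g > 2t} ≤ 5ⁿ t⁻¹ ∫_{g > t} g`, and summing this over the dyadic levels `t = 2ᵏ` gives the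
`L^s` bound for every `s > 1`.
-/

open MeasureTheory Metric Set Filter
open scoped ENNReal NNReal

noncomputable section

/-- The unit cube `Q_k = k + [0,1)^d` in `ℝ^d`. -/
def unitCube (d : ℕ) (k : Fin d → ℤ) : Set (Fin d → ℝ) :=
  {x | ∀ i, (k i : ℝ) ≤ x i ∧ x i < (k i : ℝ) + 1}

def ellNorm (d : ℕ) (p : ℝ≥0∞) (a : (Fin d → ℤ) → ℝ≥0∞) : ℝ≥0∞ :=
  if p = ∞ then ⨆ k, a k else (∑' k, a k ^ p.toReal) ^ (1 / p.toReal)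

def setLqNorm {d : ℕ} (q : ℝ≥0∞) (g : (Fin d → ℝ) → ℝ≥0∞) (s : Set (Fin d → ℝ)) : ℝ≥0∞ :=
  if q = ∞ then essSup g (volume.restrict s)
  else (∫⁻ x in s, g x ^ q.toReal) ^ (1 / q.toReal)

def amalgamNormE (d : ℕ) (q p : ℝ≥0∞) (g : (Fin d → ℝ) → ℝ≥0∞) : ℝ≥0∞ :=
  ellNorm d p fun k => setLqNorm q g (unitCube d k)

/-- The Wiener amalgam quasi-norm `‖f‖_{q,p}` of `f : ℝ^d → ℂ`. -/
def amalgamNorm (d : ℕ) (q p : ℝ≥0∞) (f : (Fin d → ℝ) → ℂ) : ℝ≥0∞ :=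
  amalgamNormE d q p fun x => (‖f x‖₊ : ℝ≥0∞)

/-- The centered Hardy–Littlewood maximal function of `f : ℝ^d → ℂ`, with values
in `ℝ≥0∞`. -/
def maximalFn (d : ℕ) (f : (Fin d → ℝ) → ℂ) (x : Fin d → ℝ) : ℝ≥0∞ :=
  ⨆ r : {r : ℝ // 0 < r},
    (volume (ball x (r : ℝ)))⁻¹ * ∫⁻ y in ball x (r : ℝ), (‖f y‖₊ : ℝ≥0∞)

section Dyadic

lemma rpow_le_tsum_ite_two_rpow {s : ℝ} (hs : 0 < s) (a : ℝ≥0∞) :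
    a ^ s ≤ ∑' n : ℤ, if (2 : ℝ≥0∞) ^ ((n : ℝ) + 1) < a then 2 ^ (((n : ℝ) + 2) * s) else 0 := by
  rcases eq_or_ne a 0 with rfl | ha0
  · simp [ENNReal.zero_rpow_of_pos hs]
  rcases eq_or_ne a ∞ with rfl | hatop
  · set f : ℤ → ℝ≥0∞ := fun n =>
      if (2 : ℝ≥0∞) ^ ((n : ℝ) + 1) < ∞ then 2 ^ (((n : ℝ) + 2) * s) else 0
    have hf : ∀ n : ℕ, 1 ≤ f n := fun n => by
      simp only [f, Int.cast_natCast]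
      rw [if_pos (ENNReal.rpow_lt_top_of_nonneg (by positivity) ENNReal.ofNat_ne_top)]
      exact ENNReal.one_le_rpow one_le_two (by positivity)
    calc ∞ ^ s = ∑' _ : ℕ, (1 : ℝ≥0∞) := by
          rw [ENNReal.top_rpow_of_pos hs, ENNReal.tsum_const_eq_top_of_ne_zero one_ne_zero]
      _ ≤ ∑' n : ℕ, f n := ENNReal.tsum_le_tsum hf
      _ ≤ ∑' n : ℤ, f n := ENNReal.tsum_comp_le_tsum_of_injective Nat.cast_injective f
  obtain ⟨m, hm_lt, hm_le⟩ :=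
    ENNReal.exists_mem_Ioc_zpow ha0 hatop ENNReal.one_lt_two ENNReal.ofNat_ne_top
  rw [← ENNReal.rpow_intCast] at hm_lt
  rw [← ENNReal.rpow_intCast, Int.cast_add, Int.cast_one] at hm_le
  refine le_trans ?_ (ENNReal.le_tsum (m - 1))
  rw [Int.cast_sub, Int.cast_one, sub_add_cancel (m : ℝ) 1, if_pos hm_lt, ENNReal.rpow_mul,
    show (m : ℝ) - 1 + 2 = m + 1 by ring]
  exact ENNReal.rpow_le_rpow hm_le hs.le

lemma tsum_ite_two_rpow_le {s : ℝ} (hs : 1 < s) (a : ℝ≥0∞) :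
    ∑' n : ℤ, (if (2 : ℝ≥0∞) ^ (n : ℝ) < a then 2 ^ ((n : ℝ) * (s - 1)) * a else 0)
      ≤ (1 - 2 ^ (1 - s))⁻¹ * a ^ s := by
  rcases eq_or_ne a 0 with rfl | ha0
  · simp
  rcases eq_or_ne a ∞ with rfl | hatop
  · have hκ : (1 - (2 : ℝ≥0∞) ^ (1 - s))⁻¹ ≠ 0 :=
      ENNReal.inv_ne_zero.2 (ENNReal.sub_ne_top ENNReal.one_ne_top)
    simp [ENNReal.top_rpow_of_pos (by linarith : 0 < s), ENNReal.mul_top hκ]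
  obtain ⟨m, hm_lt, hm_le⟩ :=
    ENNReal.exists_mem_Ioc_zpow ha0 hatop ENNReal.one_lt_two ENNReal.ofNat_ne_top
  rw [← ENNReal.rpow_intCast] at hm_lt
  rw [← ENNReal.rpow_intCast, Int.cast_add, Int.cast_one] at hm_le
  set f : ℤ → ℝ≥0∞ := fun n => if (2 : ℝ≥0∞) ^ (n : ℝ) < a then 2 ^ ((n : ℝ) * (s - 1)) * a else 0
  -- only the levels `n ≤ m` contribute, and they form a geometric series
  have hsupp : Function.support f ⊆ range fun j : ℕ => m - j := by
    intro n hn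
    have hlt : (2 : ℝ≥0∞) ^ (n : ℝ) < a := by by_contra h; exact hn (if_neg h)
    have hnm : (n : ℝ) < m + 1 := by
      by_contra! h
      exact absurd (hlt.trans_le hm_le)
        (not_lt.2 (ENNReal.rpow_le_rpow_of_exponent_le one_le_two h))
    have : n < m + 1 := by exact_mod_cast hnm
    exact ⟨(m - n).toNat, by simp only; omega⟩
  have hterm : ∀ j : ℕ, f (m - j) ≤ 2 ^ ((m : ℝ) * (s - 1)) * a * (2 ^ (1 - s)) ^ j := by
    intro j
    simp only [f]
    split_ifs
    · rw [mul_right_comm, ← ENNReal.rpow_natCast, ← ENNReal.rpow_mul, ← ENNReal.rpow_add _ _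
        two_ne_zero ENNReal.ofNat_ne_top]
      push_cast
      exact le_of_eq (by congr 2; ring)
    · exact zero_le
  have hinj : Function.Injective fun j : ℕ => m - j := fun a b h => by simpa using h
  calc ∑' n, f n = ∑' j : ℕ, f (m - j) := (hinj.tsum_eq hsupp).symm
    _ ≤ ∑' j : ℕ, 2 ^ ((m : ℝ) * (s - 1)) * a * (2 ^ (1 - s)) ^ j := ENNReal.tsum_le_tsum hterm
    _ = 2 ^ ((m : ℝ) * (s - 1)) * a * (1 - 2 ^ (1 - s))⁻¹ := by
        rw [ENNReal.tsum_mul_left, ENNReal.tsum_geometric]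
    _ ≤ a ^ (s - 1) * a * (1 - 2 ^ (1 - s))⁻¹ := by
        rw [ENNReal.rpow_mul]
        gcongr
    _ = (1 - 2 ^ (1 - s))⁻¹ * a ^ s := by
        rw [mul_comm]
        nth_rw 2 [← ENNReal.rpow_one a]
        rw [← ENNReal.rpow_add _ _ ha0 hatop, sub_add_cancel]

theorem lintegral_rpow_le_of_dyadic_distribution_le {X : Type*} [MeasurableSpace X]
    {μ : Measure X} {g h : X → ℝ≥0∞} (hg : Measurable g) (hh : Measurable h) {A : ℝ≥0∞}
    {s : ℝ} (hs : 1 < s)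
    (hA : ∀ n : ℤ, μ {x | 2 ^ ((n : ℝ) + 1) < h x}
      ≤ A * (2 ^ (n : ℝ))⁻¹ * ∫⁻ x in {x | 2 ^ (n : ℝ) < g x}, g x ∂μ) :
    ∫⁻ x, h x ^ s ∂μ ≤ A * 2 ^ (2 * s) * (1 - 2 ^ (1 - s))⁻¹ * ∫⁻ x, g x ^ s ∂μ := by
  have hlevel : ∀ n : ℤ, MeasurableSet {x | (2 : ℝ≥0∞) ^ (n : ℝ) < g x} :=
    fun n => measurableSet_lt measurable_const hg
  have hweight : ∀ (n : ℤ) (c : ℝ≥0∞), 2 ^ (((n : ℝ) + 2) * s) * (A * (2 ^ (n : ℝ))⁻¹ * c)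
      = A * 2 ^ (2 * s) * (2 ^ ((n : ℝ) * (s - 1)) * c) := fun n c => by
    have e : (2 : ℝ≥0∞) ^ (((n : ℝ) + 2) * s) * 2 ^ (-(n : ℝ))
        = 2 ^ (2 * s) * 2 ^ ((n : ℝ) * (s - 1)) := by
      rw [← ENNReal.rpow_add _ _ two_ne_zero ENNReal.ofNat_ne_top,
        ← ENNReal.rpow_add _ _ two_ne_zero ENNReal.ofNat_ne_top]
      congr 1; ring
    calc _ = A * (2 ^ (((n : ℝ) + 2) * s) * 2 ^ (-(n : ℝ))) * c := by rw [ENNReal.rpow_neg]; ring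
      _ = _ := by rw [e]; ring
  calc ∫⁻ x, h x ^ s ∂μ
      ≤ ∫⁻ x, ∑' n : ℤ, {x | 2 ^ ((n : ℝ) + 1) < h x}.indicator
          (fun _ => 2 ^ (((n : ℝ) + 2) * s)) x ∂μ := by
        refine lintegral_mono fun x => ?_
        simpa only [indicator_apply, mem_ofPred_eq] using
          rpow_le_tsum_ite_two_rpow (by linarith) (h x)
    _ = ∑' n : ℤ, 2 ^ (((n : ℝ) + 2) * s) * μ {x | 2 ^ ((n : ℝ) + 1) < h x} := by
        rw [lintegral_tsum fun n =>
          (measurable_const.indicator (measurableSet_lt measurable_const hh)).aemeasurable]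
        exact tsum_congr fun n =>
          lintegral_indicator_const (measurableSet_lt measurable_const hh) _
    _ ≤ ∑' n : ℤ, 2 ^ (((n : ℝ) + 2) * s) *
          (A * (2 ^ (n : ℝ))⁻¹ * ∫⁻ x in {x | 2 ^ (n : ℝ) < g x}, g x ∂μ) := by
        gcongr with n
        exact hA n
    _ = A * 2 ^ (2 * s) * ∫⁻ x, ∑' n : ℤ, {x | 2 ^ (n : ℝ) < g x}.indicator
          (fun x => 2 ^ ((n : ℝ) * (s - 1)) * g x) x ∂μ := by
        rw [lintegral_tsum fun n => ((hg.const_mul _).indicator (hlevel n)).aemeasurable,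
          ← ENNReal.tsum_mul_left]
        refine tsum_congr fun n => ?_
        rw [lintegral_indicator (hlevel n), lintegral_const_mul _ hg, hweight]
    _ ≤ A * 2 ^ (2 * s) * ∫⁻ x, (1 - 2 ^ (1 - s))⁻¹ * g x ^ s ∂μ := by
        gcongr with x
        simpa only [indicator_apply, mem_ofPred_eq] using tsum_ite_two_rpow_le hs (g x)
    _ = A * 2 ^ (2 * s) * (1 - 2 ^ (1 - s))⁻¹ * ∫⁻ x, g x ^ s ∂μ := by
        rw [lintegral_const_mul _ (hg.pow_const s)]
        ring

end Dyadic

section MaximalFunction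

variable {X : Type*} [PseudoMetricSpace X] [MeasurableSpace X]

def maximalFunction (μ : Measure X) (g : X → ℝ≥0∞) (x : X) : ℝ≥0∞ :=
  ⨆ r : {r : ℝ // 0 < r}, (μ (ball x r))⁻¹ * ∫⁻ y in ball x r, g y ∂μ

variable {μ : Measure X} {g g' : X → ℝ≥0∞}

lemma le_maximalFunction (g : X → ℝ≥0∞) (x : X) {r : ℝ} (hr : 0 < r) :
    (μ (ball x r))⁻¹ * ∫⁻ y in ball x r, g y ∂μ ≤ maximalFunction μ g x :=
  le_iSup (fun r : {r : ℝ // 0 < r} => (μ (ball x r))⁻¹ * ∫⁻ y in ball x r, g y ∂μ) ⟨r, hr⟩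

lemma maximalFunction_congr_ae (h : g =ᵐ[μ] g') : maximalFunction μ g = maximalFunction μ g' := by
  funext x
  simp only [maximalFunction, lintegral_congr_ae (ae_restrict_of_ae h)]

lemma maximalFunction_add_le (hg : AEMeasurable g μ) (g' : X → ℝ≥0∞) (x : X) :
    maximalFunction μ (g + g') x ≤ maximalFunction μ g x + maximalFunction μ g' x :=
  iSup_le fun r => by
    rw [Pi.add_def, lintegral_add_left' hg.restrict, mul_add]
    exact add_le_add (le_maximalFunction g x r.2) (le_maximalFunction g' x r.2)

lemma maximalFunction_le_of_le {c : ℝ≥0∞} (h : ∀ y, g y ≤ c) (x : X) :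
    maximalFunction μ g x ≤ c :=
  iSup_le fun r => calc
    (μ (ball x r))⁻¹ * ∫⁻ y in ball x r, g y ∂μ ≤ (μ (ball x r))⁻¹ * (c * μ (ball x r)) := by
      gcongr
      exact (lintegral_mono h).trans_eq (setLIntegral_const _ c)
    _ = c * ((μ (ball x r))⁻¹ * μ (ball x r)) := by ring
    _ ≤ c := mul_le_of_le_one_right' (ENNReal.inv_mul_le_one _)

lemma setLIntegral_ball_le_mul_maximalFunction [ProperSpace X] [IsFiniteMeasureOnCompacts μ]
    [μ.IsOpenPosMeasure] (g : X → ℝ≥0∞) (x : X) {r : ℝ} (hr : 0 < r) :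
    ∫⁻ y in ball x r, g y ∂μ ≤ μ (ball x r) * maximalFunction μ g x := by
  calc ∫⁻ y in ball x r, g y ∂μ
      = μ (ball x r) * ((μ (ball x r))⁻¹ * ∫⁻ y in ball x r, g y ∂μ) := by
        rw [← mul_assoc, ENNReal.mul_inv_cancel (measure_ball_pos μ x hr).ne'
          measure_ball_lt_top.ne, one_mul]
    _ ≤ μ (ball x r) * maximalFunction μ g x := by gcongr; exact le_maximalFunction g x hr

end MaximalFunction

section HardyLittlewood

variable {E : Type*} [NormedAddCommGroup E] [NormedSpace ℝ E] [FiniteDimensional ℝ E]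
  [MeasurableSpace E] [BorelSpace E] {μ : Measure E} [μ.IsAddHaarMeasure] {g : E → ℝ≥0∞}

open Module

lemma addHaar_ball_mul_eq (x y : E) {c : ℝ} (hc : 0 < c) (r : ℝ) :
    μ (ball x (c * r)) = ENNReal.ofReal (c ^ finrank ℝ E) * μ (ball y r) := by
  rw [Measure.addHaar_ball_mul_of_pos μ x hc, Measure.addHaar_ball_center μ y]

theorem lowerSemicontinuous_maximalFunction (g : E → ℝ≥0∞) :
    LowerSemicontinuous (maximalFunction μ g) := by
  intro x y hy
  obtain ⟨⟨r, hr⟩, hyr⟩ := lt_iSup_iff.1 hy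
  have hunion : ball x r = ⋃ n : ℕ, ball x (r - 1 / (n + 1)) := by
    ext z
    simp only [mem_ball, mem_iUnion]
    refine ⟨fun hz => ?_, fun ⟨n, hn⟩ => by linarith [Nat.one_div_pos_of_nat (α := ℝ) (n := n)]⟩
    obtain ⟨n, hn⟩ := exists_nat_one_div_lt (sub_pos.2 hz)
    exact ⟨n, by linarith⟩
  have hmono : Monotone fun n : ℕ => ball x (r - 1 / (n + 1)) := fun m n hmn =>
    ball_subset_ball (by gcongr)
  -- `A ↦ ∫⁻ y in A, g y ∂μ` is the measure `μ.withDensity g`, hence continuous from below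
  have hsup : ∫⁻ y in ball x r, g y ∂μ = ⨆ n : ℕ, ∫⁻ y in ball x (r - 1 / (n + 1)), g y ∂μ := by
    simp only [← withDensity_apply' g]
    rw [hunion, hmono.measure_iUnion]
  rw [hsup, ENNReal.mul_iSup] at hyr
  obtain ⟨n, hn⟩ := lt_iSup_iff.1 hyr
  filter_upwards [ball_mem_nhds x (Nat.one_div_pos_of_nat (α := ℝ) (n := n))] with x' hx'
  calc y < (μ (ball x r))⁻¹ * ∫⁻ y in ball x (r - 1 / (n + 1)), g y ∂μ := hn
    _ ≤ (μ (ball x' r))⁻¹ * ∫⁻ y in ball x' r, g y ∂μ := by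
      rw [Measure.addHaar_ball_center μ x, Measure.addHaar_ball_center μ x']
      gcongr
      exact ball_subset_ball' (by rw [dist_comm]; linarith [mem_ball.1 hx'])
    _ ≤ maximalFunction μ g x' := le_maximalFunction g x' hr

theorem measure_le_of_forall_exists_ball_average_gt (g : E → ℝ≥0∞) {t : ℝ≥0∞} (ht : t ≠ 0)
    {S : Set E} {R : ℝ}
    (hS : ∀ x ∈ S, ∃ r ∈ Ioc 0 R, t < (μ (ball x r))⁻¹ * ∫⁻ y in ball x r, g y ∂μ) :
    μ S ≤ 5 ^ finrank ℝ E * t⁻¹ * ∫⁻ y, g y ∂μ := by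
  choose! ρ hρ hρt using hS
  obtain ⟨u, huS, hdisj, hcover⟩ :=
    Vitali.exists_disjoint_subfamily_covering_enlargement_closedBall S id ρ R
      (fun x hx => (hρ x hx).2) 4 (by norm_num)
  have hdisj' : u.PairwiseDisjoint fun x => ball x (ρ x) :=
    hdisj.mono fun x => ball_subset_closedBall
  have hu : u.Countable := hdisj'.countable_of_isOpen (fun _ _ => isOpen_ball)
    fun x hx => nonempty_ball.2 (hρ x (huS hx)).1
  have hheavy : ∀ x ∈ S, μ (ball x (ρ x)) ≤ t⁻¹ * ∫⁻ y in ball x (ρ x), g y ∂μ := by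
    intro x hx
    set B := ball x (ρ x)
    calc μ B = t⁻¹ * (t * μ B) := by
          rw [← mul_assoc, ENNReal.inv_mul_cancel ht (hρt x hx).ne_top, one_mul]
      _ ≤ t⁻¹ * ((μ B)⁻¹ * (∫⁻ y in B, g y ∂μ) * μ B) := by gcongr; exact (hρt x hx).le
      _ = t⁻¹ * ((∫⁻ y in B, g y ∂μ) * ((μ B)⁻¹ * μ B)) := by ring
      _ ≤ t⁻¹ * ∫⁻ y in B, g y ∂μ := by
          gcongr; exact mul_le_of_le_one_right' (ENNReal.inv_mul_le_one _)
  calc μ S ≤ μ (⋃ x ∈ u, ball x (5 * ρ x)) := measure_mono fun z hz => by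
        obtain ⟨x, hxu, hsub⟩ := hcover z hz
        refine mem_biUnion hxu (closedBall_subset_ball ?_ (hsub (mem_closedBall_self ?_)))
        · linarith [(hρ x (huS hxu)).1]
        · exact (hρ z hz).1.le
    _ ≤ ∑' x : u, μ (ball (x : E) (5 * ρ x)) := measure_biUnion_le μ hu _
    _ ≤ ∑' x : u, 5 ^ finrank ℝ E * (t⁻¹ * ∫⁻ y in ball (x : E) (ρ x), g y ∂μ) := by
        refine ENNReal.tsum_le_tsum fun x => ?_
        rw [addHaar_ball_mul_eq (x : E) (x : E) (by norm_num : (0 : ℝ) < 5),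
          ENNReal.ofReal_pow (by norm_num), ENNReal.ofReal_ofNat]
        gcongr
        exact hheavy x (huS x.2)
    _ = 5 ^ finrank ℝ E * t⁻¹ * ∫⁻ y in ⋃ x ∈ u, ball x (ρ x), g y ∂μ := by
        rw [ENNReal.tsum_mul_left, ENNReal.tsum_mul_left,
          lintegral_biUnion hu (fun _ _ => measurableSet_ball) hdisj', mul_assoc]
    _ ≤ 5 ^ finrank ℝ E * t⁻¹ * ∫⁻ y, g y ∂μ := by gcongr; exact Measure.restrict_le_self

theorem measure_lt_maximalFunction_le (g : E → ℝ≥0∞) {t : ℝ≥0∞} (ht : t ≠ 0) :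
    μ {x | t < maximalFunction μ g x} ≤ 5 ^ finrank ℝ E * t⁻¹ * ∫⁻ y, g y ∂μ := by
  set S : ℕ → Set E := fun m =>
    {x | ∃ r ∈ Ioc (0 : ℝ) m, t < (μ (ball x r))⁻¹ * ∫⁻ y in ball x r, g y ∂μ}
  have hS : {x | t < maximalFunction μ g x} = ⋃ m, S m := by
    ext x
    simp only [mem_ofPred_eq, mem_iUnion, maximalFunction, lt_iSup_iff, S]
    constructor
    · rintro ⟨⟨r, hr⟩, h⟩
      obtain ⟨m, hm⟩ := exists_nat_ge r
      exact ⟨m, r, ⟨hr, hm⟩, h⟩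
    · rintro ⟨m, r, hr, h⟩
      exact ⟨⟨r, hr.1⟩, h⟩
  have hmono : Monotone S := fun m n hmn x ⟨r, hr, h⟩ =>
    ⟨r, ⟨hr.1, hr.2.trans (by exact_mod_cast hmn)⟩, h⟩
  rw [hS, hmono.measure_iUnion]
  exact iSup_le fun m => measure_le_of_forall_exists_ball_average_gt g ht fun x hx => hx

theorem measure_two_mul_lt_maximalFunction_le (hg : Measurable g) {t : ℝ≥0∞} (ht0 : t ≠ 0)
    (ht : t ≠ ∞) :
    μ {x | 2 * t < maximalFunction μ g x}
      ≤ 5 ^ finrank ℝ E * t⁻¹ * ∫⁻ y in {y | t < g y}, g y ∂μ := by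
  set L := {y | t < g y}
  have hL : MeasurableSet L := measurableSet_lt measurable_const hg
  have hsplit : ∀ x, maximalFunction μ g x ≤ maximalFunction μ (L.indicator g) x + t := by
    intro x
    calc maximalFunction μ g x = maximalFunction μ (L.indicator g + Lᶜ.indicator g) x := by
          rw [indicator_self_add_compl]
      _ ≤ maximalFunction μ (L.indicator g) x + maximalFunction μ (Lᶜ.indicator g) x :=
          maximalFunction_add_le (hg.indicator hL).aemeasurable _ x
      _ ≤ maximalFunction μ (L.indicator g) x + t := by
          gcongr
          refine maximalFunction_le_of_le (fun y => ?_) x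
          exact indicator_le' (fun y hy => not_lt.1 hy) (fun _ _ => zero_le) y
  calc μ {x | 2 * t < maximalFunction μ g x}
      ≤ μ {x | t < maximalFunction μ (L.indicator g) x} := measure_mono fun x hx => by
        have := (show 2 * t < _ from hx).trans_le (hsplit x)
        rw [two_mul] at this
        exact (ENNReal.add_lt_add_iff_right ht).1 this
    _ ≤ 5 ^ finrank ℝ E * t⁻¹ * ∫⁻ y, L.indicator g y ∂μ := measure_lt_maximalFunction_le _ ht0
    _ = 5 ^ finrank ℝ E * t⁻¹ * ∫⁻ y in L, g y ∂μ := by rw [lintegral_indicator hL]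

theorem lintegral_maximalFunction_rpow_le (hg : Measurable g) {s : ℝ} (hs : 1 < s) :
    ∫⁻ x, maximalFunction μ g x ^ s ∂μ
      ≤ 5 ^ finrank ℝ E * 2 ^ (2 * s) * (1 - 2 ^ (1 - s))⁻¹ * ∫⁻ x, g x ^ s ∂μ := by
  refine lintegral_rpow_le_of_dyadic_distribution_le hg
    (lowerSemicontinuous_maximalFunction g).measurable hs fun n => ?_
  rw [ENNReal.rpow_add _ _ two_ne_zero ENNReal.ofNat_ne_top, ENNReal.rpow_one, mul_comm]
  exact measure_two_mul_lt_maximalFunction_le hg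
    (ENNReal.rpow_pos two_pos ENNReal.ofNat_ne_top).ne'
    (ENNReal.rpow_ne_top_of_nonneg' two_pos ENNReal.ofNat_ne_top)

theorem exists_eLpNorm_maximalFunction_le {p : ℝ≥0∞} (hp : 1 < p) (hp' : p ≠ ∞) :
    ∃ C : ℝ≥0, ∀ g : E → ℝ≥0∞, Measurable g →
      eLpNorm (maximalFunction μ g) p μ ≤ C * eLpNorm g p μ := by
  set s := p.toReal
  have hs : 1 < s := by simpa using ENNReal.toReal_strict_mono hp' hp
  set K : ℝ≥0∞ := 5 ^ finrank ℝ E * 2 ^ (2 * s) * (1 - 2 ^ (1 - s))⁻¹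
  have hK : K ≠ ∞ := by
    refine ENNReal.mul_ne_top (ENNReal.mul_ne_top (by simp) (by simp)) ?_
    rw [ne_eq, ENNReal.inv_eq_top, tsub_eq_zero_iff_le, not_le]
    exact ENNReal.rpow_lt_one_of_one_lt_of_neg ENNReal.one_lt_two (by linarith)
  refine ⟨(K ^ (1 / s)).toNNReal, fun g hg => ?_⟩
  have hp0 : p ≠ 0 := (zero_lt_one.trans hp).ne'
  simp only [eLpNorm_eq_lintegral_rpow_enorm_toReal hp0 hp', enorm_eq_self]
  rw [ENNReal.coe_toNNReal (ENNReal.rpow_ne_top_of_nonneg (by positivity) hK),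
    ← ENNReal.mul_rpow_of_nonneg _ _ (by positivity)]
  gcongr
  exact lintegral_maximalFunction_rpow_le hg hs

end HardyLittlewood

section Amalgam

variable {d : ℕ}

def cubeIndex (y : Fin d → ℝ) : Fin d → ℤ := fun i => ⌊y i⌋

lemma mem_unitCube_iff {k : Fin d → ℤ} {y : Fin d → ℝ} : y ∈ unitCube d k ↔ cubeIndex y = k := by
  simp only [unitCube, mem_ofPred_eq, cubeIndex, funext_iff, Int.floor_eq_iff]

lemma measurable_cubeIndex : Measurable (cubeIndex (d := d)) := by
  unfold cubeIndex; fun_prop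

lemma unitCube_eq_preimage (k : Fin d → ℤ) : unitCube d k = cubeIndex ⁻¹' {k} := by
  ext y; exact mem_unitCube_iff

lemma measurableSet_unitCube (k : Fin d → ℤ) : MeasurableSet (unitCube d k) := by
  rw [unitCube_eq_preimage]; exact measurable_cubeIndex (measurableSet_singleton k)

lemma volume_unitCube (k : Fin d → ℤ) : volume (unitCube d k) = 1 := by
  have : unitCube d k = univ.pi fun i => Ico (k i : ℝ) (k i + 1) := by
    ext y; simp [unitCube, Set.mem_pi]
  simp [this, Real.volume_pi_Ico]

instance isProbabilityMeasure_restrict_unitCube (k : Fin d → ℤ) :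
    IsProbabilityMeasure (volume.restrict (unitCube d k)) :=
  ⟨by simp [volume_unitCube]⟩

-- `Fin d → ℝ` carries the sup metric, so balls are cubes.
lemma dist_lt_one_of_mem_unitCube {k : Fin d → ℤ} {y y' : Fin d → ℝ} (hy : y ∈ unitCube d k)
    (hy' : y' ∈ unitCube d k) : dist y y' < 1 := by
  refine (dist_pi_lt_iff one_pos).2 fun i => ?_
  rw [Real.dist_eq, abs_lt]
  constructor <;> linarith [(hy i).1, (hy i).2, (hy' i).1, (hy' i).2]

lemma lintegral_eq_tsum_unitCube (μ : Measure (Fin d → ℝ)) (u : (Fin d → ℝ) → ℝ≥0∞) :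
    ∫⁻ y, u y ∂μ = ∑' k, ∫⁻ y in unitCube d k, u y ∂μ := by
  have hcover : ⋃ k, unitCube d k = univ :=
    eq_univ_of_forall fun y => mem_iUnion.2 ⟨cubeIndex y, mem_unitCube_iff.2 rfl⟩
  have hdisj : Pairwise (Function.onFun Disjoint (unitCube d)) := fun k j hkj => by
    simp only [Function.onFun, unitCube_eq_preimage]
    exact (disjoint_singleton.2 hkj).preimage _
  rw [← lintegral_iUnion measurableSet_unitCube hdisj, hcover, Measure.restrict_univ]

def cubeLpNorm (q : ℝ≥0∞) (g : (Fin d → ℝ) → ℝ≥0∞) (k : Fin d → ℤ) : ℝ≥0∞ :=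
  eLpNorm g q (volume.restrict (unitCube d k))

lemma amalgamNormE_eq_eLpNorm {q p : ℝ≥0∞} (hq0 : q ≠ 0) (hq : q ≠ ∞) (hp0 : p ≠ 0) (hp : p ≠ ∞)
    (g : (Fin d → ℝ) → ℝ≥0∞) :
    amalgamNormE d q p g = eLpNorm (cubeLpNorm q g) p Measure.count := by
  simp only [amalgamNormE, ellNorm, setLqNorm, cubeLpNorm, if_neg hq, if_neg hp,
    eLpNorm_eq_lintegral_rpow_enorm_toReal hq0 hq, eLpNorm_eq_lintegral_rpow_enorm_toReal hp0 hp,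
    enorm_eq_self, lintegral_count]

lemma eLpNorm_cubeLpNorm {p : ℝ≥0∞} (hp0 : p ≠ 0) (hp : p ≠ ∞) (u : (Fin d → ℝ) → ℝ≥0∞) :
    eLpNorm (cubeLpNorm p u) p Measure.count = eLpNorm u p volume := by
  simp only [cubeLpNorm, eLpNorm_eq_lintegral_rpow_enorm_toReal hp0 hp, enorm_eq_self,
    lintegral_count, lintegral_eq_tsum_unitCube volume, one_div,
    ENNReal.rpow_inv_rpow (ENNReal.toReal_pos hp0 hp).ne']

lemma cubeLpNorm_comp_cubeIndex {p : ℝ≥0∞} (hp0 : p ≠ 0) (b : (Fin d → ℤ) → ℝ≥0∞)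
    (k : Fin d → ℤ) : cubeLpNorm p (b ∘ cubeIndex) k = b k := by
  have hconst : b ∘ cubeIndex =ᵐ[volume.restrict (unitCube d k)] fun _ => b k :=
    ae_restrict_of_forall_mem (measurableSet_unitCube k) fun y hy => by
      simp [mem_unitCube_iff.1 hy]
  rw [cubeLpNorm, eLpNorm_congr_ae hconst, eLpNorm_const _ hp0 (NeZero.ne _)]
  simp

lemma setLIntegral_unitCube_le_cubeLpNorm {q : ℝ≥0∞} (hq : 1 ≤ q) {g : (Fin d → ℝ) → ℝ≥0∞}
    (hg : AEMeasurable g) (k : Fin d → ℤ) : ∫⁻ y in unitCube d k, g y ≤ cubeLpNorm q g k := by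
  simpa [cubeLpNorm, eLpNorm_one_eq_lintegral_enorm] using
    eLpNorm_le_eLpNorm_of_exponent_le hq hg.restrict.aestronglyMeasurable

lemma cubeLpNorm_le_of_forall_le {q : ℝ≥0∞} {f : (Fin d → ℝ) → ℝ≥0∞} {c : ℝ≥0∞}
    {k : Fin d → ℤ} (h : ∀ x ∈ unitCube d k, f x ≤ c) : cubeLpNorm q f k ≤ c := by
  simpa [cubeLpNorm, volume_unitCube] using
    eLpNorm_le_of_ae_enorm_bound (p := q) (f := f) (C := c) (μ := volume.restrict (unitCube d k))
    (ae_restrict_of_forall_mem (measurableSet_unitCube k) (by simpa only [enorm_eq_self] using h))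

lemma le_mul_cubeLpNorm_of_forall_le {p : ℝ≥0∞} (hp0 : p ≠ 0) {f : (Fin d → ℝ) → ℝ≥0∞}
    {c : ℝ≥0∞} {C : ℝ≥0} {k : Fin d → ℤ} (h : ∀ z ∈ unitCube d k, c ≤ C * f z) :
    c ≤ C * cubeLpNorm p f k := by
  have := eLpNorm_le_nnreal_smul_eLpNorm_of_ae_le_mul' (μ := volume.restrict (unitCube d k))
    (f := fun _ => c) (g := f)
    (ae_restrict_of_forall_mem (measurableSet_unitCube k) (by simpa using h)) p
  simpa [eLpNorm_const _ hp0 (NeZero.ne _), cubeLpNorm, ENNReal.smul_def] using this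

def nearCubes (k : Fin d → ℤ) : Set (Fin d → ℝ) := cubeIndex ⁻¹' Icc (k - 1) (k + 1)

lemma measurableSet_nearCubes (k : Fin d → ℤ) : MeasurableSet (nearCubes k) :=
  measurable_cubeIndex (to_countable _).measurableSet

lemma ball_subset_nearCubes {k : Fin d → ℤ} {x : Fin d → ℝ} {r : ℝ} (hx : x ∈ unitCube d k)
    (hr : r ≤ 1) : ball x r ⊆ nearCubes k := by
  intro y hy
  have hyx : ∀ i, |y i - x i| < 1 := fun i => by
    rw [← Real.dist_eq]
    exact (dist_le_pi_dist y x i).trans_lt ((mem_ball.1 hy).trans_le hr)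
  refine ⟨fun i => ?_, fun i => ?_⟩
  · show k i - 1 ≤ ⌊y i⌋
    exact Int.le_floor.2 (by push_cast; linarith [(abs_lt.1 (hyx i)).1, (hx i).1])
  · show ⌊y i⌋ ≤ k i + 1
    exact Int.floor_le_iff.2 (by push_cast; linarith [(abs_lt.1 (hyx i)).2, (hx i).2])

lemma indicator_nearCubes_le (g : (Fin d → ℝ) → ℝ≥0∞) (k : Fin d → ℤ) :
    (nearCubes k).indicator g ≤ ∑ m ∈ Finset.Icc (-1) 1, (unitCube d (k + m)).indicator g := by
  intro y
  rw [Finset.sum_apply]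
  by_cases hy : y ∈ nearCubes k
  · have hm : cubeIndex y - k ∈ Finset.Icc (-1 : Fin d → ℤ) 1 := by
      obtain ⟨h1, h2⟩ := hy
      rw [Finset.mem_Icc]
      constructor <;> intro i <;> [have := h1 i; have := h2 i] <;>
        simp only [Pi.sub_apply, Pi.add_apply, Pi.neg_apply, Pi.one_apply] at this ⊢ <;> omega
    refine le_trans (le_of_eq ?_) (Finset.single_le_sum
      (f := fun m => (unitCube d (k + m)).indicator g y) (fun _ _ => zero_le) hm)
    rw [indicator_of_mem hy, indicator_of_mem (mem_unitCube_iff.2 (by abel))]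
  · rw [indicator_of_notMem hy]
    exact zero_le

lemma eLpNorm_indicator_nearCubes_le {q : ℝ≥0∞} (hq : 1 ≤ q) {g : (Fin d → ℝ) → ℝ≥0∞}
    (hg : Measurable g) (k : Fin d → ℤ) :
    eLpNorm ((nearCubes k).indicator g) q volume
      ≤ ∑ m ∈ Finset.Icc (-1) 1, cubeLpNorm q g (k + m) := by
  calc eLpNorm ((nearCubes k).indicator g) q volume
      ≤ eLpNorm (∑ m ∈ Finset.Icc (-1) 1, (unitCube d (k + m)).indicator g) q volume :=
        eLpNorm_mono_enorm fun y => by simpa only [enorm_eq_self] using indicator_nearCubes_le g k y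
    _ ≤ ∑ m ∈ Finset.Icc (-1) 1, eLpNorm ((unitCube d (k + m)).indicator g) q volume :=
        eLpNorm_sum_le
          (fun m _ => (hg.indicator (measurableSet_unitCube _)).aestronglyMeasurable) hq
    _ = ∑ m ∈ Finset.Icc (-1) 1, cubeLpNorm q g (k + m) := by
        simp only [cubeLpNorm, eLpNorm_indicator_eq_eLpNorm_restrict (measurableSet_unitCube _)]

lemma setLIntegral_ball_le_setLIntegral_cubeLpNorm {q : ℝ≥0∞} (hq : 1 ≤ q)
    {g : (Fin d → ℝ) → ℝ≥0∞} (hg : AEMeasurable g) {k : Fin d → ℤ} {x z : Fin d → ℝ}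
    (hx : x ∈ unitCube d k) (hz : z ∈ unitCube d k) (r : ℝ) :
    ∫⁻ y in ball x r, g y ≤ ∫⁻ y in ball z (r + 2), cubeLpNorm q g (cubeIndex y) := by
  rw [lintegral_eq_tsum_unitCube, lintegral_eq_tsum_unitCube]
  refine ENNReal.tsum_le_tsum fun j => ?_
  simp only [Measure.restrict_restrict (measurableSet_unitCube j)]
  rcases (unitCube d j ∩ ball x r).eq_empty_or_nonempty with hempty | ⟨y₀, hy₀, hy₀x⟩
  · simp [hempty]
  have hsub : unitCube d j ⊆ ball z (r + 2) := fun w hw => by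
    rw [mem_ball]
    calc dist w z ≤ dist w y₀ + dist y₀ x + dist x z := dist_triangle4 w y₀ x z
      _ < 1 + r + 1 := by
        gcongr
        · exact dist_lt_one_of_mem_unitCube hw hy₀
        · exact hy₀x
        · exact dist_lt_one_of_mem_unitCube hx hz
      _ = r + 2 := by ring
  calc ∫⁻ y in unitCube d j ∩ ball x r, g y
      ≤ ∫⁻ y in unitCube d j, g y := lintegral_mono_set inter_subset_left
    _ ≤ cubeLpNorm q g j := setLIntegral_unitCube_le_cubeLpNorm hq hg j
    _ = ∫⁻ y in unitCube d j ∩ ball z (r + 2), cubeLpNorm q g (cubeIndex y) := by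
        rw [inter_eq_left.2 hsub, setLIntegral_congr_fun (measurableSet_unitCube j)
          (fun y hy => by rw [mem_unitCube_iff.1 hy]), setLIntegral_const, volume_unitCube,
          mul_one]

theorem maximalFunction_indicator_compl_nearCubes_le {q : ℝ≥0∞} (hq : 1 ≤ q)
    {g : (Fin d → ℝ) → ℝ≥0∞} (hg : AEMeasurable g) {k : Fin d → ℤ} {x z : Fin d → ℝ}
    (hx : x ∈ unitCube d k) (hz : z ∈ unitCube d k) :
    maximalFunction volume ((nearCubes k)ᶜ.indicator g) x
      ≤ 3 ^ d * maximalFunction volume (cubeLpNorm q g ∘ cubeIndex) z := by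
  refine iSup_le fun ⟨r, hr⟩ => ?_
  rcases le_or_gt r 1 with hr1 | hr1
  · have hzero : ∫⁻ y in ball x r, (nearCubes k)ᶜ.indicator g y = 0 := by
      rw [setLIntegral_congr_fun measurableSet_ball fun y hy =>
        indicator_of_notMem (not_not.2 (ball_subset_nearCubes hx hr1 hy)) g]
      simp
    simp [hzero]
  set B := ball x r
  calc (volume B)⁻¹ * ∫⁻ y in B, (nearCubes k)ᶜ.indicator g y
      ≤ (volume B)⁻¹ * ∫⁻ y in ball z (3 * r), cubeLpNorm q g (cubeIndex y) := by
        gcongr (volume B)⁻¹ * ?_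
        calc ∫⁻ y in B, (nearCubes k)ᶜ.indicator g y
            ≤ ∫⁻ y in B, g y := lintegral_mono (indicator_le_self _ _)
          _ ≤ ∫⁻ y in ball z (r + 2), cubeLpNorm q g (cubeIndex y) :=
              setLIntegral_ball_le_setLIntegral_cubeLpNorm hq hg hx hz r
          _ ≤ _ := lintegral_mono_set (ball_subset_ball (by linarith))
    _ ≤ (volume B)⁻¹ *
          (volume (ball z (3 * r)) * maximalFunction volume (cubeLpNorm q g ∘ cubeIndex) z) := by
        gcongr
        exact setLIntegral_ball_le_mul_maximalFunction _ z (by positivity)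
    _ = 3 ^ d * maximalFunction volume (cubeLpNorm q g ∘ cubeIndex) z *
          ((volume B)⁻¹ * volume B) := by
        rw [addHaar_ball_mul_eq z x three_pos, Module.finrank_fin_fun,
          ENNReal.ofReal_pow zero_le_three, ENNReal.ofReal_ofNat]
        ring
    _ ≤ 3 ^ d * maximalFunction volume (cubeLpNorm q g ∘ cubeIndex) z :=
        mul_le_of_le_one_right' (ENNReal.inv_mul_le_one _)

end Amalgam

section AmalgamBound

variable {d : ℕ}

lemma eLpNorm_count_sum_comp_add_right_le {G : Type*} [AddGroup G] [Countable G]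
    [MeasurableSpace G] [DiscreteMeasurableSpace G] {p : ℝ≥0∞} (hp : 1 ≤ p) (s : Finset G)
    (b : G → ℝ≥0∞) :
    eLpNorm (fun k => ∑ m ∈ s, b (k + m)) p Measure.count
      ≤ s.card * eLpNorm b p Measure.count := by
  have hshift : ∀ m, eLpNorm (fun k => b (k + m)) p Measure.count = eLpNorm b p Measure.count :=
    fun m => eLpNorm_comp_measurePreserving (measurable_of_countable b).aestronglyMeasurable
      (measurePreserving_add_right Measure.count m)
  calc eLpNorm (fun k => ∑ m ∈ s, b (k + m)) p Measure.count
      = eLpNorm (∑ m ∈ s, fun k => b (k + m)) p Measure.count := by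
        congr 1; ext k; rw [Finset.sum_apply]
    _ ≤ ∑ m ∈ s, eLpNorm (fun k => b (k + m)) p Measure.count :=
        eLpNorm_sum_le (fun m _ => (measurable_of_countable _).aestronglyMeasurable) hp
    _ = s.card * eLpNorm b p Measure.count := by
        simp only [hshift, Finset.sum_const, nsmul_eq_mul]

lemma cubeLpNorm_maximalFunction_le {q p : ℝ≥0∞} (hq : 1 ≤ q) (hp0 : p ≠ 0)
    {g : (Fin d → ℝ) → ℝ≥0∞} (hg : Measurable g) (k : Fin d → ℤ) :
    cubeLpNorm q (maximalFunction volume g) k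
      ≤ eLpNorm (maximalFunction volume ((nearCubes k).indicator g)) q volume
        + (3 ^ d : ℝ≥0) * cubeLpNorm p (maximalFunction volume (cubeLpNorm q g ∘ cubeIndex)) k := by
  set N := nearCubes k
  have hM : ∀ u : (Fin d → ℝ) → ℝ≥0∞,
      AEStronglyMeasurable (maximalFunction volume u) (volume.restrict (unitCube d k)) :=
    fun u => (lowerSemicontinuous_maximalFunction u).measurable.aestronglyMeasurable
  calc cubeLpNorm q (maximalFunction volume g) k
      ≤ cubeLpNorm q (maximalFunction volume (N.indicator g)
          + maximalFunction volume (Nᶜ.indicator g)) k := by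
        refine eLpNorm_mono_enorm fun x => ?_
        rw [enorm_eq_self, enorm_eq_self]
        conv_lhs => rw [← indicator_self_add_compl N g]
        exact maximalFunction_add_le (hg.indicator (measurableSet_nearCubes k)).aemeasurable _ x
    _ ≤ cubeLpNorm q (maximalFunction volume (N.indicator g)) k
        + cubeLpNorm q (maximalFunction volume (Nᶜ.indicator g)) k :=
        eLpNorm_add_le (hM _) (hM _) hq
    _ ≤ _ := by
        gcongr
        · exact eLpNorm_restrict_le _ _ _ _
        · refine le_mul_cubeLpNorm_of_forall_le hp0 fun z hz => ?_
          refine cubeLpNorm_le_of_forall_le fun x hx => ?_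
          simpa using maximalFunction_indicator_compl_nearCubes_le hq hg.aemeasurable hx hz

theorem eLpNorm_cubeLpNorm_maximalFunction_le {q p : ℝ≥0∞} (hq : 1 ≤ q) (hp : 1 ≤ p)
    (hp' : p ≠ ∞) {Cq Cp : ℝ≥0}
    (hCq : ∀ g : (Fin d → ℝ) → ℝ≥0∞, Measurable g →
      eLpNorm (maximalFunction volume g) q volume ≤ Cq * eLpNorm g q volume)
    (hCp : ∀ g : (Fin d → ℝ) → ℝ≥0∞, Measurable g →
      eLpNorm (maximalFunction volume g) p volume ≤ Cp * eLpNorm g p volume)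
    {g : (Fin d → ℝ) → ℝ≥0∞} (hg : Measurable g) :
    eLpNorm (cubeLpNorm q (maximalFunction volume g)) p Measure.count
      ≤ (Cq * (Finset.Icc (-1 : Fin d → ℤ) 1).card + 3 ^ d * Cp : ℝ≥0)
        * eLpNorm (cubeLpNorm q g) p Measure.count := by
  set Box := Finset.Icc (-1 : Fin d → ℤ) 1
  set b := cubeLpNorm q g
  set H := b ∘ cubeIndex
  have hp0 : p ≠ 0 := (zero_lt_one.trans_le hp).ne'
  set T : (Fin d → ℤ) → ℝ≥0∞ := fun k =>
    eLpNorm (maximalFunction volume ((nearCubes k).indicator g)) q volume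
  set F : (Fin d → ℤ) → ℝ≥0∞ := fun k =>
    (3 ^ d : ℝ≥0) * cubeLpNorm p (maximalFunction volume H) k
  have hT : ∀ k, T k ≤ Cq * ∑ m ∈ Box, b (k + m) := fun k =>
    (hCq _ (hg.indicator (measurableSet_nearCubes k))).trans
      (by gcongr; exact eLpNorm_indicator_nearCubes_le hq hg k)
  calc eLpNorm (cubeLpNorm q (maximalFunction volume g)) p Measure.count
      ≤ eLpNorm (T + F) p Measure.count := eLpNorm_mono_enorm fun k => by
        simpa only [enorm_eq_self, Pi.add_apply] using cubeLpNorm_maximalFunction_le hq hp0 hg k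
    _ ≤ eLpNorm T p Measure.count + eLpNorm F p Measure.count :=
        eLpNorm_add_le (measurable_of_countable T).aestronglyMeasurable
          (measurable_of_countable F).aestronglyMeasurable hp
    _ ≤ Cq * eLpNorm (fun k => ∑ m ∈ Box, b (k + m)) p Measure.count
        + (3 ^ d : ℝ≥0) * eLpNorm (cubeLpNorm p (maximalFunction volume H)) p Measure.count := by
        gcongr
        · exact eLpNorm_le_nnreal_smul_eLpNorm_of_ae_le_mul' (ae_of_all _ hT) p
        · exact eLpNorm_le_nnreal_smul_eLpNorm_of_ae_le_mul' (ae_of_all _ fun k => le_rfl) p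
    _ ≤ Cq * (Box.card * eLpNorm b p Measure.count)
        + (3 ^ d : ℝ≥0) * (Cp * eLpNorm H p volume) := by
        rw [eLpNorm_cubeLpNorm hp0 hp']
        gcongr
        · exact eLpNorm_count_sum_comp_add_right_le hp Box b
        · exact hCp H ((measurable_of_countable b).comp measurable_cubeIndex)
    _ = _ := by
        rw [← eLpNorm_cubeLpNorm hp0 hp' H, funext (cubeLpNorm_comp_cubeIndex hp0 b)]
        push_cast
        ring

theorem exists_amalgamNormE_maximalFunction_le {q p : ℝ≥0∞} (hq : 1 < q) (hq' : q ≠ ∞)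
    (hp : 1 < p) (hp' : p ≠ ∞) :
    ∃ C : ℝ≥0, ∀ g : (Fin d → ℝ) → ℝ≥0∞, AEMeasurable g →
      amalgamNormE d q p (maximalFunction volume g) ≤ C * amalgamNormE d q p g := by
  obtain ⟨Cq, hCq⟩ := exists_eLpNorm_maximalFunction_le (μ := (volume : Measure (Fin d → ℝ))) hq hq'
  obtain ⟨Cp, hCp⟩ := exists_eLpNorm_maximalFunction_le (μ := (volume : Measure (Fin d → ℝ))) hp hp'
  refine ⟨Cq * (Finset.Icc (-1 : Fin d → ℤ) 1).card + 3 ^ d * Cp, fun g hg => ?_⟩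
  have hq0 : q ≠ 0 := (zero_lt_one.trans hq).ne'
  have hp0 : p ≠ 0 := (zero_lt_one.trans hp).ne'
  have hcube : cubeLpNorm q g = cubeLpNorm q (hg.mk g) :=
    funext fun k => eLpNorm_congr_ae (ae_restrict_of_ae hg.ae_eq_mk)
  rw [amalgamNormE_eq_eLpNorm hq0 hq' hp0 hp', amalgamNormE_eq_eLpNorm hq0 hq' hp0 hp',
    maximalFunction_congr_ae hg.ae_eq_mk, hcube]
  exact eLpNorm_cubeLpNorm_maximalFunction_le hq.le hp.le hp' hCq hCp hg.measurable_mk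

end AmalgamBound

/-- For `1 < q < ∞` and `1 < p < ∞` the centered Hardy–Littlewood
maximal operator is bounded on the amalgam space `(L^q, ℓ^p)(ℝ^d)`:
`‖𝔐 f‖_{q,p} ≤ C ‖f‖_{q,p}` for all locally integrable `f`. -/
theorem stmt6 (d : ℕ) (q p : ℝ≥0∞) (hq1 : 1 < q) (hq2 : q < ∞) (hp1 : 1 < p) (hp2 : p < ∞) :
    ∃ C : ℝ, 0 < C ∧ ∀ f : (Fin d → ℝ) → ℂ, LocallyIntegrable f volume →
      amalgamNormE d q p (maximalFn d f) ≤ ENNReal.ofReal C * amalgamNorm d q p f := by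
  obtain ⟨C, hC⟩ := exists_amalgamNormE_maximalFunction_le (d := d) hq1 hq2.ne hp1 hp2.ne
  refine ⟨C + 1, by positivity, fun f hf => ?_⟩
  -- `maximalFn d f` and `amalgamNorm d q p f` unfold to `maximalFunction` and `amalgamNormE`
  -- applied to `fun y => ‖f y‖ₑ`
  calc amalgamNormE d q p (maximalFn d f) ≤ C * amalgamNorm d q p f :=
        hC _ hf.aestronglyMeasurable.enorm
    _ ≤ ENNReal.ofReal (C + 1) * amalgamNorm d q p f := by
        gcongr
        rw [← ENNReal.ofReal_coe_nnreal]
        exact ENNReal.ofReal_le_ofReal (by linarith)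

end
end

section
/- Suppose 0 < q ≤ p ≤ 1 and 1 < r < ∞. Let φ₁(Q) = ‖χ_Q‖_{(L^q,ℓ^p)}/|Q| for cubes Q, let δ ≥ ⌊d(1/q−1)⌋ be an integer, and let g ∈ 𝓛_{r′,φ₁,δ}^{loc} (the local Campanato-type space). Then for every finite linear combination f = ∑_{n=0}^m λ_n a_n of local (q,r,δ)-atoms (with cubes Q^n), the pairing satisfies |∫_{ℝ^d} g(x) f(x) dx| ≤ ‖∑_{n=0}^m (|λ_n|/‖χ_{Q^n}‖_q)^η χ_{Q^n}‖_{q/η, p/η}^{1/η} · ‖g‖_{𝓛_{r′,φ₁,δ}^{loc}} for any fixed 0 < η < q, where 1/r + 1/r′ = 1. -/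
open MeasureTheory Metric Set Filter
open scoped ENNReal NNReal

noncomputable section

/-- The closed cube with center `c` and side length `ℓ` in `ℝ^d`. -/
def cube (d : ℕ) (c : Fin d → ℝ) (ℓ : ℝ) : Set (Fin d → ℝ) :=
  {x | ∀ i, |x i - c i| ≤ ℓ / 2}

/-- The indicator function of the cube with center `c` and side length `ℓ`. -/
def cubeInd (d : ℕ) (c : Fin d → ℝ) (ℓ : ℝ) : (Fin d → ℝ) → ℂ :=
  (cube d c ℓ).indicator fun _ => 1

/-- A local `(q, r, s)`-atom `a` associated with the cube of center `c` and side length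
`ℓ` (so `|Q| = ℓ^d`): `a` is supported in `Q`, `‖a‖_{L^r} ≤ |Q|^{1/r - 1/q}`, and the
vanishing-moment conditions up to order `s` hold when `|Q| < 1`. -/
def IsLocalAtom (d : ℕ) (q r : ℝ≥0∞) (s : ℕ) (a : (Fin d → ℝ) → ℂ)
    (c : Fin d → ℝ) (ℓ : ℝ) : Prop :=
  0 < ℓ ∧ Measurable a ∧ Function.support a ⊆ cube d c ℓ ∧
    eLpNorm a r volume ≤ ENNReal.ofReal (ℓ ^ d) ^ (1 / r.toReal - 1 / q.toReal) ∧
    (ℓ ^ d < 1 → ∀ β : Fin d → ℕ, (∑ i, β i) ≤ s →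
      ∫ x : Fin d → ℝ, (∏ i, (x i : ℂ) ^ β i) * a x = 0)

/-- The dilated function `φ_t(x) = t^{-d} φ(x/t)`. -/
def phit (d : ℕ) (φ : (Fin d → ℝ) → ℂ) (t : ℝ) : (Fin d → ℝ) → ℂ :=
  fun x => ((t ^ d : ℝ))⁻¹ • φ (t⁻¹ • x)

/-- Convolution of two functions on `ℝ^d`. -/
def convFn (d : ℕ) (f g : (Fin d → ℝ) → ℂ) (x : Fin d → ℝ) : ℂ :=
  ∫ y, f y * g (x - y)

/-- The local maximal function `M_loc(f)(x) = sup_{0 < t ≤ 1} |(f ∗ φ_t)(x)|`. -/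
def MlocFn (d : ℕ) (φ f : (Fin d → ℝ) → ℂ) (x : Fin d → ℝ) : ℝ≥0∞ :=
  ⨆ t : {t : ℝ // 0 < t ∧ t ≤ 1}, (‖convFn d f (phit d φ (t : ℝ)) x‖₊ : ℝ≥0∞)

/-- `P : ℝ^d → ℂ` is a polynomial function of degree at most `δ`. -/
def IsPolyDeg (d δ : ℕ) (P : (Fin d → ℝ) → ℂ) : Prop :=
  ∃ coef : (Fin d → Fin (δ + 1)) → ℂ, ∀ x, P x =
    ∑ β : Fin d → Fin (δ + 1),
      if (∑ i, (β i : ℕ)) ≤ δ then coef β * ∏ i, (x i : ℂ) ^ (β i : ℕ) else 0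

/-- The function `φ₁(Q) = ‖χ_Q‖_{(L^q,ℓ^p)} / |Q|` for the cube of center `c` and side
length `ℓ`. -/
def phiOne (d : ℕ) (q p : ℝ≥0∞) (c : Fin d → ℝ) (ℓ : ℝ) : ℝ≥0∞ :=
  amalgamNorm d q p (cubeInd d c ℓ) / ENNReal.ofReal (ℓ ^ d)

/-- The local Campanato-type quasi-norm `‖g‖_{𝓛^{loc}_{r',φ₁,δ}}`, relative to a given
assignment `P` of (projection) polynomials to cubes. -/
def campNormLoc (d : ℕ) (q p r' : ℝ≥0∞) (g : (Fin d → ℝ) → ℂ)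
    (P : (Fin d → ℝ) → ℝ → (Fin d → ℝ) → ℂ) : ℝ≥0∞ :=
  (⨆ (c : Fin d → ℝ) (ℓ : {ℓ : ℝ // 0 < ℓ ∧ 1 ≤ ℓ ^ d}),
    (phiOne d q p c ℓ)⁻¹ * ((ENNReal.ofReal ((ℓ : ℝ) ^ d))⁻¹ *
      ∫⁻ x in cube d c ℓ, (‖g x‖₊ : ℝ≥0∞) ^ r'.toReal) ^ (1 / r'.toReal)) +
  (⨆ (c : Fin d → ℝ) (ℓ : {ℓ : ℝ // 0 < ℓ ∧ ℓ ^ d < 1}),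
    (phiOne d q p c ℓ)⁻¹ * ((ENNReal.ofReal ((ℓ : ℝ) ^ d))⁻¹ *
      ∫⁻ x in cube d c ℓ, (‖g x - P c ℓ x‖₊ : ℝ≥0∞) ^ r'.toReal) ^ (1 / r'.toReal))

/-!
Write `∫ g f = ∑ λₙ ∫ g aₙ`. For an atom on a cube `Q` with `|Q| < 1` the vanishing moments allow
replacing `g` by `g - P_Q`; Hölder's inequality and the size condition then give
`|∫ g a| ≤ |Q| ^ (1 - 1/q) φ₁(Q) ‖g‖ = ‖χ_Q‖_{q,p} / ‖χ_Q‖_q · ‖g‖` (for `|Q| ≥ 1` the same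
without `P_Q`). It remains to bound `∑ μₙ ‖χ_{Qₙ}‖_{q,p}`, `μₙ = |λₙ| / ‖χ_{Qₙ}‖_q`: since
`q, p ≤ 1`, the reverse Minkowski inequality in `L^q` and in `ℓ^p` bounds it by
`‖∑ μₙ χ_{Qₙ}‖_{q,p}`, and pointwise `∑ μₙ χ_{Qₙ} ≤ (∑ μₙ^η χ_{Qₙ})^{1/η}` as `η ≤ 1`.
-/

section Inequalities

variable {α ι : Type*} [MeasurableSpace α] {μ : Measure α} {t : ℝ}

theorem ENNReal.rpow_sum_le_sum_rpow (s : Finset ι) (ht0 : 0 < t) (ht1 : t ≤ 1)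
    (y : ι → ℝ≥0∞) : (∑ i ∈ s, y i) ^ t ≤ ∑ i ∈ s, y i ^ t := by
  induction s using Finset.cons_induction with
  | empty => simp [ENNReal.zero_rpow_of_pos ht0]
  | cons j s hj ih =>
    simp only [Finset.sum_cons]
    exact (ENNReal.rpow_add_le_add_rpow _ _ ht0.le ht1).trans (add_le_add le_rfl ih)

theorem ENNReal.sum_le_rpow_sum_rpow (s : Finset ι) (ht0 : 0 < t) (ht1 : t ≤ 1)
    (y : ι → ℝ≥0∞) : ∑ i ∈ s, y i ≤ (∑ i ∈ s, y i ^ t) ^ (1 / t) := by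
  rw [← ENNReal.rpow_le_rpow_iff ht0, ← ENNReal.rpow_mul, one_div_mul_cancel ht0.ne',
    ENNReal.rpow_one]
  exact ENNReal.rpow_sum_le_sum_rpow s ht0 ht1 y

theorem ENNReal.mul_rpow_sub_one {x : ℝ≥0∞} (hx : x ≠ ∞) (ht0 : 0 < t) :
    x * x ^ (t - 1) = x ^ t := by
  rcases eq_or_ne x 0 with rfl | h0
  · simp [ENNReal.zero_rpow_of_pos ht0]
  · calc x * x ^ (t - 1) = x ^ (1 + (t - 1)) := by rw [ENNReal.rpow_add _ _ h0 hx, ENNReal.rpow_one]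
      _ = x ^ t := by rw [add_sub_cancel]

/-- Hölder's inequality with exponents `1/t` and `1/(1-t)`, applied to
`u ^ t = (u h ^ (t - 1)) ^ t * h ^ (t (1 - t))`. -/
theorem lintegral_rpow_le_of_ae_le (ht0 : 0 < t) (ht1 : t < 1) {u h : α → ℝ≥0∞}
    (hu : AEMeasurable u μ) (hh : AEMeasurable h μ) (huh : u ≤ᵐ[μ] h)
    (h_fin : ∀ᵐ x ∂μ, h x ≠ ∞) :
    ∫⁻ x, u x ^ t ∂μ ≤ (∫⁻ x, u x * h x ^ (t - 1) ∂μ) ^ t * (∫⁻ x, h x ^ t ∂μ) ^ (1 - t) := by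
  have hconj : (1 / t).HolderConjugate (1 / (1 - t)) :=
    ⟨by simp, by positivity, by simp; linarith⟩
  have holder := ENNReal.lintegral_mul_le_Lp_mul_Lq μ hconj
    (f := fun x => (u x * h x ^ (t - 1)) ^ t) (g := fun x => h x ^ (t * (1 - t)))
    ((hu.mul (hh.pow_const _)).pow_const t) (hh.pow_const _)
  have hpow : ∀ (z : ℝ≥0∞) (s : ℝ), s ≠ 0 → (z ^ s) ^ (1 / s) = z := fun z s hs => by
    rw [← ENNReal.rpow_mul, mul_one_div_cancel hs, ENNReal.rpow_one]
  have hsplit : ∀ᵐ x ∂μ, u x ^ t = (u x * h x ^ (t - 1)) ^ t * h x ^ (t * (1 - t)) := by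
    filter_upwards [huh, h_fin] with x hux hx
    rcases eq_or_ne (h x) 0 with h0 | h0
    · have : u x = 0 := le_antisymm (h0 ▸ hux) zero_le
      simp [this, ENNReal.zero_rpow_of_pos ht0]
    · rw [ENNReal.mul_rpow_of_nonneg _ _ ht0.le, ← ENNReal.rpow_mul, mul_assoc,
        ← ENNReal.rpow_add _ _ h0 hx]
      rw [show (t - 1) * t + t * (1 - t) = 0 by ring, ENNReal.rpow_zero, mul_one]
  calc ∫⁻ x, u x ^ t ∂μ
      = ∫⁻ x, (u x * h x ^ (t - 1)) ^ t * h x ^ (t * (1 - t)) ∂μ := lintegral_congr_ae hsplit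
    _ ≤ _ := holder
    _ = _ := by
      have h1t : 1 - t ≠ 0 := sub_ne_zero.mpr ht1.ne'
      simp only [hpow _ _ ht0.ne', one_div_one_div, ← ENNReal.rpow_mul, mul_assoc,
        mul_one_div_cancel h1t, mul_one]

/-- Reverse Minkowski inequality. With `h = ∑ i, f i` and `S = ∫ h ^ t`,
`lintegral_rpow_le_of_ae_le` bounds the `i`-th term by `(∫ f i * h ^ (t - 1)) * S ^ ((1 - t) / t)`,
and these sum to `S ^ (1 / t)`. -/
theorem sum_lintegral_rpow_rpow_le (s : Finset ι) (ht0 : 0 < t) (ht1 : t ≤ 1)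
    {f : ι → α → ℝ≥0∞} (hf : ∀ i ∈ s, AEMeasurable (f i) μ) :
    ∑ i ∈ s, (∫⁻ x, f i x ^ t ∂μ) ^ (1 / t) ≤ (∫⁻ x, (∑ i ∈ s, f i x) ^ t ∂μ) ^ (1 / t) := by
  obtain rfl | ht1 := ht1.eq_or_lt
  · simp only [ENNReal.rpow_one, div_one]
    rw [lintegral_finsetSum' s hf]
  set h := fun x => ∑ i ∈ s, f i x
  set S := ∫⁻ x, h x ^ t ∂μ
  have hh : AEMeasurable h μ := Finset.aemeasurable_fun_sum s hf
  rcases eq_or_ne S ∞ with hS | hS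
  · rw [hS, ENNReal.top_rpow_of_pos (by positivity)]
    exact le_top
  have h_fin : ∀ᵐ x ∂μ, h x ≠ ∞ := by
    filter_upwards [ae_lt_top' (hh.pow_const t) hS] with x hx htop
    simp [htop, ENNReal.top_rpow_of_pos ht0] at hx
  have hsum : ∑ i ∈ s, ∫⁻ x, f i x * h x ^ (t - 1) ∂μ = S := by
    rw [← lintegral_finsetSum' s (f := fun i x => f i x * h x ^ (t - 1))
      fun i hi => (hf i hi).mul (hh.pow_const _)]
    refine lintegral_congr_ae ?_
    filter_upwards [h_fin] with x hx
    rw [← Finset.sum_mul, ENNReal.mul_rpow_sub_one hx ht0]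
  have hterm : ∀ i ∈ s, (∫⁻ x, f i x ^ t ∂μ) ^ (1 / t)
      ≤ (∫⁻ x, f i x * h x ^ (t - 1) ∂μ) * S ^ ((1 - t) / t) := by
    intro i hi
    have hfh : f i ≤ᵐ[μ] h := ae_of_all _ fun x =>
      Finset.single_le_sum (f := fun j => f j x) (fun _ _ => zero_le) hi
    calc (∫⁻ x, f i x ^ t ∂μ) ^ (1 / t)
        ≤ ((∫⁻ x, f i x * h x ^ (t - 1) ∂μ) ^ t * S ^ (1 - t)) ^ (1 / t) :=
          ENNReal.rpow_le_rpow (lintegral_rpow_le_of_ae_le ht0 ht1 (hf i hi) hh hfh h_fin)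
            (by positivity)
      _ = _ := by
          rw [ENNReal.mul_rpow_of_nonneg _ _ (by positivity), ← ENNReal.rpow_mul,
            ← ENNReal.rpow_mul, mul_one_div_cancel ht0.ne', ENNReal.rpow_one, mul_one_div]
  calc ∑ i ∈ s, (∫⁻ x, f i x ^ t ∂μ) ^ (1 / t)
      ≤ ∑ i ∈ s, (∫⁻ x, f i x * h x ^ (t - 1) ∂μ) * S ^ ((1 - t) / t) :=
        Finset.sum_le_sum hterm
    _ = S ^ (1 / t) := by
        rw [← Finset.sum_mul, hsum]
        have hexp : 1 / t = 1 + (1 - t) / t := by field_simp; ring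
        rw [hexp, ENNReal.rpow_add_of_nonneg _ _ zero_le_one (by bound), ENNReal.rpow_one]

theorem sum_tsum_rpow_rpow_le {κ : Type*} [Countable κ] (s : Finset ι) (ht0 : 0 < t)
    (ht1 : t ≤ 1) (f : ι → κ → ℝ≥0∞) :
    ∑ i ∈ s, (∑' k, f i k ^ t) ^ (1 / t) ≤ (∑' k, (∑ i ∈ s, f i k) ^ t) ^ (1 / t) := by
  let _ : MeasurableSpace κ := ⊤
  simp only [← lintegral_count]
  exact sum_lintegral_rpow_rpow_le s ht0 ht1 fun i _ => (measurable_from_top).aemeasurable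

lemma ENNReal.toReal_le_one_of_le_one {x : ℝ≥0∞} (hx : x ≤ 1) : x.toReal ≤ 1 :=
  ENNReal.toReal_le_of_le_ofReal zero_le_one (by simpa using hx)

lemma ENNReal.toReal_div_ofReal (q : ℝ≥0∞) {η : ℝ} (hη : 0 < η) :
    (q / ENNReal.ofReal η).toReal = q.toReal / η := by
  rw [ENNReal.toReal_div, ENNReal.toReal_ofReal hη.le]

lemma ENNReal.div_ofReal_ne_top {q : ℝ≥0∞} {η : ℝ} (hq : q ≠ ∞) (hη : 0 < η) :
    q / ENNReal.ofReal η ≠ ∞ :=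
  ENNReal.div_ne_top hq (ENNReal.ofReal_pos.mpr hη).ne'

lemma ENNReal.HolderConjugate.one_div_toReal_add_one_div_toReal {p q : ℝ≥0∞}
    [ENNReal.HolderConjugate p q] : 1 / p.toReal + 1 / q.toReal = 1 := by
  have h := ENNReal.HolderConjugate.inv_add_inv_eq_one p q
  rw [one_div, one_div, ← ENNReal.toReal_inv, ← ENNReal.toReal_inv, ← ENNReal.toReal_add, h,
    ENNReal.toReal_one]
  · exact ENNReal.inv_ne_top.mpr (ENNReal.HolderConjugate.ne_zero p q)
  · exact ENNReal.inv_ne_top.mpr (ENNReal.HolderConjugate.ne_zero q p)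

lemma enorm_integral_mul_sum_le (s : Finset ι) (g : α → ℂ) (lam : ι → ℂ) {a : ι → α → ℂ}
    (h : ∀ i ∈ s, Integrable (fun x => g x * a i x) μ) :
    (‖∫ x, g x * ∑ i ∈ s, lam i * a i x ∂μ‖₊ : ℝ≥0∞) ≤
      ∑ i ∈ s, (‖lam i‖₊ : ℝ≥0∞) * ‖∫ x, g x * a i x ∂μ‖₊ := by
  have hlin : ∫ x, g x * ∑ i ∈ s, lam i * a i x ∂μ = ∑ i ∈ s, lam i * ∫ x, g x * a i x ∂μ := by
    simp_rw [Finset.mul_sum, mul_left_comm (g _)]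
    rw [integral_finsetSum _ fun i hi => (h i hi).const_mul _]
    simp_rw [integral_const_mul]
  rw [hlin]
  calc (‖∑ i ∈ s, lam i * ∫ x, g x * a i x ∂μ‖₊ : ℝ≥0∞)
      ≤ ∑ i ∈ s, (‖lam i * ∫ x, g x * a i x ∂μ‖₊ : ℝ≥0∞) := by exact_mod_cast nnnorm_sum_le _ _
    _ = _ := by simp only [nnnorm_mul, ENNReal.coe_mul]

end Inequalities

section AmalgamNorm

variable {d : ℕ} {q p : ℝ≥0∞} {η : ℝ}

lemma setLqNorm_const_mul (hq0 : q ≠ 0) (hq : q ≠ ∞) {C : ℝ≥0∞} (hC : C ≠ ∞)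
    (h : (Fin d → ℝ) → ℝ≥0∞) (s : Set (Fin d → ℝ)) :
    setLqNorm q (fun x => C * h x) s = C * setLqNorm q h s := by
  have hq' : 0 < q.toReal := ENNReal.toReal_pos hq0 hq
  simp only [setLqNorm, if_neg hq, ENNReal.mul_rpow_of_nonneg _ _ hq'.le]
  rw [lintegral_const_mul' _ _ (ENNReal.rpow_ne_top_of_nonneg hq'.le hC),
    ENNReal.mul_rpow_of_nonneg _ _ (by positivity), ← ENNReal.rpow_mul,
    mul_one_div_cancel hq'.ne', ENNReal.rpow_one]

lemma ellNorm_const_mul (hp0 : p ≠ 0) (hp : p ≠ ∞) (C : ℝ≥0∞) (a : (Fin d → ℤ) → ℝ≥0∞) :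
    ellNorm d p (fun k => C * a k) = C * ellNorm d p a := by
  have hp' : 0 < p.toReal := ENNReal.toReal_pos hp0 hp
  simp only [ellNorm, if_neg hp, ENNReal.mul_rpow_of_nonneg _ _ hp'.le]
  rw [ENNReal.tsum_mul_left, ENNReal.mul_rpow_of_nonneg _ _ (by positivity),
    ← ENNReal.rpow_mul, mul_one_div_cancel hp'.ne', ENNReal.rpow_one]

lemma amalgamNormE_const_mul (hq0 : q ≠ 0) (hq : q ≠ ∞) (hp0 : p ≠ 0) (hp : p ≠ ∞)
    {C : ℝ≥0∞} (hC : C ≠ ∞) (h : (Fin d → ℝ) → ℝ≥0∞) :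
    amalgamNormE d q p (fun x => C * h x) = C * amalgamNormE d q p h := by
  simp only [amalgamNormE, setLqNorm_const_mul hq0 hq hC, ellNorm_const_mul hp0 hp]

lemma le_ellNorm (hp0 : p ≠ 0) (hp : p ≠ ∞) (a : (Fin d → ℤ) → ℝ≥0∞) (k : Fin d → ℤ) :
    a k ≤ ellNorm d p a := by
  have hp' : 0 < p.toReal := ENNReal.toReal_pos hp0 hp
  rw [ellNorm, if_neg hp]
  calc a k = (a k ^ p.toReal) ^ (1 / p.toReal) := by
        rw [← ENNReal.rpow_mul, mul_one_div_cancel hp'.ne', ENNReal.rpow_one]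
    _ ≤ _ := ENNReal.rpow_le_rpow (ENNReal.le_tsum k) (by positivity)

lemma amalgamNormE_mono (hq : q ≠ ∞) (hp : p ≠ ∞) {g h : (Fin d → ℝ) → ℝ≥0∞}
    (hgh : ∀ x, g x ≤ h x) : amalgamNormE d q p g ≤ amalgamNormE d q p h := by
  simp only [amalgamNormE, ellNorm, setLqNorm, if_neg hq, if_neg hp]
  gcongr with k x
  exact hgh x

lemma amalgamNormE_rpow_one_div (hq : q ≠ ∞) (hp : p ≠ ∞) (hη : 0 < η)
    (h : (Fin d → ℝ) → ℝ≥0∞) :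
    amalgamNormE d q p (fun x => h x ^ (1 / η)) =
      amalgamNormE d (q / ENNReal.ofReal η) (p / ENNReal.ofReal η) h ^ (1 / η) := by
  simp only [amalgamNormE, ellNorm, setLqNorm, if_neg hq, if_neg hp,
    if_neg (ENNReal.div_ofReal_ne_top hq hη), if_neg (ENNReal.div_ofReal_ne_top hp hη),
    ENNReal.toReal_div_ofReal q hη, ENNReal.toReal_div_ofReal p hη, ← ENNReal.rpow_mul]
  have e1 : 1 / η * q.toReal = q.toReal / η := by ring
  have e2 : 1 / (q.toReal / η) * (p.toReal / η) = 1 / q.toReal * p.toReal := by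
    field_simp
  have e3 : 1 / (p.toReal / η) * (1 / η) = 1 / p.toReal := by field_simp
  rw [e1, e2, e3]

lemma sum_amalgamNormE_le {ι : Type*} (hq0 : q ≠ 0) (hq1 : q ≤ 1) (hp0 : p ≠ 0) (hp1 : p ≤ 1)
    (s : Finset ι) {f : ι → (Fin d → ℝ) → ℝ≥0∞} (hf : ∀ i ∈ s, Measurable (f i)) :
    ∑ i ∈ s, amalgamNormE d q p (f i) ≤ amalgamNormE d q p (fun x => ∑ i ∈ s, f i x) := by
  have hq : q ≠ ∞ := ne_top_of_le_ne_top ENNReal.one_ne_top hq1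
  have hp : p ≠ ∞ := ne_top_of_le_ne_top ENNReal.one_ne_top hp1
  have hq' : 0 < q.toReal := ENNReal.toReal_pos hq0 hq
  have hp' : 0 < p.toReal := ENNReal.toReal_pos hp0 hp
  simp only [amalgamNormE, ellNorm, setLqNorm, if_neg hq, if_neg hp]
  refine (sum_tsum_rpow_rpow_le s hp' (ENNReal.toReal_le_one_of_le_one hp1) _).trans ?_
  gcongr with k
  exact sum_lintegral_rpow_rpow_le s hq' (ENNReal.toReal_le_one_of_le_one hq1)
    fun i hi => (hf i hi).aemeasurable

theorem sum_mul_amalgamNormE_indicator_le {ι : Type*}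
    (hq0 : q ≠ 0) (hq1 : q ≤ 1) (hp0 : p ≠ 0) (hp1 : p ≤ 1) (hη0 : 0 < η) (hη1 : η ≤ 1)
    (s : Finset ι) {Q : ι → Set (Fin d → ℝ)} (hQ : ∀ i ∈ s, MeasurableSet (Q i))
    {w : ι → ℝ≥0∞} (hw : ∀ i ∈ s, w i ≠ ∞) :
    ∑ i ∈ s, w i * amalgamNormE d q p ((Q i).indicator fun _ => 1) ≤
      amalgamNormE d (q / ENNReal.ofReal η) (p / ENNReal.ofReal η)
        (fun x => ∑ i ∈ s, w i ^ η * (Q i).indicator (fun _ => 1) x) ^ (1 / η) := by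
  have hq : q ≠ ∞ := ne_top_of_le_ne_top ENNReal.one_ne_top hq1
  have hp : p ≠ ∞ := ne_top_of_le_ne_top ENNReal.one_ne_top hp1
  have hpow : ∀ i x, (w i * (Q i).indicator (fun _ => 1) x) ^ η =
      w i ^ η * (Q i).indicator (fun _ => 1) x := fun i x => by
    by_cases hx : x ∈ Q i <;> simp [hx, ENNReal.zero_rpow_of_pos hη0]
  calc ∑ i ∈ s, w i * amalgamNormE d q p ((Q i).indicator fun _ => 1)
      = ∑ i ∈ s, amalgamNormE d q p (fun x => w i * (Q i).indicator (fun _ => 1) x) :=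
        Finset.sum_congr rfl fun i hi =>
          (amalgamNormE_const_mul hq0 hq hp0 hp (hw i hi) _).symm
    _ ≤ amalgamNormE d q p (fun x => ∑ i ∈ s, w i * (Q i).indicator (fun _ => 1) x) :=
        sum_amalgamNormE_le hq0 hq1 hp0 hp1 s fun i hi =>
          measurable_const.mul (measurable_const.indicator (hQ i hi))
    _ ≤ amalgamNormE d q p
          (fun x => (∑ i ∈ s, w i ^ η * (Q i).indicator (fun _ => 1) x) ^ (1 / η)) :=
        amalgamNormE_mono hq hp fun x => by
          simpa only [hpow] using ENNReal.sum_le_rpow_sum_rpow s hη0 hη1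
            fun i => w i * (Q i).indicator (fun _ => 1) x
    _ = _ := amalgamNormE_rpow_one_div hq hp hη0 _

end AmalgamNorm

section Cubes

lemma cube_eq_pi (d : ℕ) (c : Fin d → ℝ) (ℓ : ℝ) :
    cube d c ℓ = Set.pi univ fun i => Icc (c i - ℓ / 2) (c i + ℓ / 2) := by
  ext x
  simp only [cube, Set.mem_ofPred_eq, Set.mem_pi, mem_univ, true_implies, mem_Icc, abs_le]
  exact forall_congr' fun i => by constructor <;> rintro ⟨h1, h2⟩ <;> constructor <;> linarith

lemma measurableSet_cube (d : ℕ) (c : Fin d → ℝ) (ℓ : ℝ) : MeasurableSet (cube d c ℓ) := by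
  rw [cube_eq_pi]
  exact .univ_pi fun _ => measurableSet_Icc

lemma isCompact_cube (d : ℕ) (c : Fin d → ℝ) (ℓ : ℝ) : IsCompact (cube d c ℓ) := by
  rw [cube_eq_pi]
  exact isCompact_univ_pi fun _ => isCompact_Icc

lemma volume_cube (d : ℕ) (c : Fin d → ℝ) {ℓ : ℝ} (hℓ : 0 ≤ ℓ) :
    volume (cube d c ℓ) = ENNReal.ofReal (ℓ ^ d) := by
  simp only [cube_eq_pi, volume_pi_pi, Real.volume_Icc, add_sub_sub_cancel, add_halves,
    Finset.prod_const, Finset.card_univ, Fintype.card_fin, ENNReal.ofReal_pow hℓ]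

lemma unitCube_eq_pi (d : ℕ) (k : Fin d → ℤ) :
    unitCube d k = Set.pi univ fun i => Ico (k i : ℝ) (k i + 1) := by
  ext x
  simp [unitCube, Set.mem_pi, mem_Ico]

variable {d : ℕ} {q p : ℝ≥0∞} {c : Fin d → ℝ} {ℓ : ℝ}

instance isFiniteMeasure_restrict_cube : IsFiniteMeasure (volume.restrict (cube d c ℓ)) :=
  isFiniteMeasure_restrict.mpr (isCompact_cube d c ℓ).measure_lt_top.ne

lemma volume_cube_inter_unitCube_le_one (k : Fin d → ℤ) :
    volume (cube d c ℓ ∩ unitCube d k) ≤ 1 := by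
  refine (measure_mono inter_subset_right).trans_eq ?_
  simp [unitCube_eq_pi, volume_pi_pi]

lemma volume_cube_inter_unitCube_floor_pos (hℓ : 0 < ℓ) :
    0 < volume (cube d c ℓ ∩ unitCube d fun i => ⌊c i⌋) := by
  have hbox : (Set.pi univ fun i => Ico (c i) (min (c i + ℓ / 2) (⌊c i⌋ + 1))) ⊆
      cube d c ℓ ∩ unitCube d fun i => ⌊c i⌋ := by
    intro x hx
    simp only [Set.mem_pi, mem_univ, true_implies, mem_Ico, lt_min_iff] at hx
    refine ⟨fun i => abs_le.mpr ⟨by linarith [hx i], by linarith [hx i]⟩,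
      fun i => ⟨(Int.floor_le _).trans (hx i).1, (hx i).2.2⟩⟩
  refine lt_of_lt_of_le ?_ (measure_mono hbox)
  rw [volume_pi_pi]
  refine CanonicallyOrderedAdd.prod_pos.mpr fun i _ => ?_
  rw [Real.volume_Ico, ENNReal.ofReal_pos, sub_pos]
  exact lt_min (by linarith) (Int.lt_floor_add_one _)

lemma mem_piFinset_of_cube_inter_unitCube_nonempty {k : Fin d → ℤ}
    (h : (cube d c ℓ ∩ unitCube d k).Nonempty) :
    k ∈ Fintype.piFinset fun i => Finset.Icc ⌊c i - ℓ / 2⌋ ⌊c i + ℓ / 2⌋ := by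
  obtain ⟨x, hxc, hxk⟩ := h
  simp only [Fintype.mem_piFinset, Finset.mem_Icc, Int.floor_le_iff, Int.le_floor]
  intro i
  have := abs_le.mp (hxc i)
  exact ⟨by linarith [(hxk i).2], by linarith [(hxk i).1]⟩

lemma setLqNorm_indicator_one (hq0 : q ≠ 0) (hq : q ≠ ∞) {s : Set (Fin d → ℝ)}
    (hs : MeasurableSet s) (u : Set (Fin d → ℝ)) :
    setLqNorm q (s.indicator fun _ => 1) u = volume (s ∩ u) ^ (1 / q.toReal) := by
  have hq' : 0 < q.toReal := ENNReal.toReal_pos hq0 hq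
  have hpow : (fun x => s.indicator (fun _ => (1 : ℝ≥0∞)) x ^ q.toReal) = s.indicator 1 := by
    ext x
    by_cases hx : x ∈ s <;> simp [hx, ENNReal.zero_rpow_of_pos hq']
  rw [setLqNorm, if_neg hq, hpow, lintegral_indicator_one hs, Measure.restrict_apply hs]

lemma amalgamNormE_indicator_cube_ne_zero (hq0 : q ≠ 0) (hq : q ≠ ∞) (hp0 : p ≠ 0)
    (hp : p ≠ ∞) (hℓ : 0 < ℓ) :
    amalgamNormE d q p ((cube d c ℓ).indicator fun _ => 1) ≠ 0 := by
  refine (lt_of_lt_of_le ?_ (le_ellNorm hp0 hp _ fun i => ⌊c i⌋)).ne'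
  rw [setLqNorm_indicator_one hq0 hq (measurableSet_cube d c ℓ)]
  exact ENNReal.rpow_pos (volume_cube_inter_unitCube_floor_pos hℓ)
    (ne_top_of_le_ne_top ENNReal.one_ne_top (volume_cube_inter_unitCube_le_one _))

lemma amalgamNormE_indicator_cube_ne_top (hq0 : q ≠ 0) (hq : q ≠ ∞) (hp0 : p ≠ 0)
    (hp : p ≠ ∞) :
    amalgamNormE d q p ((cube d c ℓ).indicator fun _ => 1) ≠ ∞ := by
  have hq' : 0 < q.toReal := ENNReal.toReal_pos hq0 hq
  have hp' : 0 < p.toReal := ENNReal.toReal_pos hp0 hp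
  simp only [amalgamNormE, ellNorm, if_neg hp,
    setLqNorm_indicator_one hq0 hq (measurableSet_cube d c ℓ)]
  refine ENNReal.rpow_ne_top_of_nonneg (by positivity) ?_
  rw [tsum_eq_sum (s := Fintype.piFinset fun i => Finset.Icc ⌊c i - ℓ / 2⌋ ⌊c i + ℓ / 2⌋)]
  · refine ENNReal.sum_ne_top.mpr fun k _ => ENNReal.rpow_ne_top_of_nonneg hp'.le ?_
    exact ENNReal.rpow_ne_top_of_nonneg (by positivity)
      (ne_top_of_le_ne_top ENNReal.one_ne_top (volume_cube_inter_unitCube_le_one k))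
  · intro k hk
    have hempty : cube d c ℓ ∩ unitCube d k = ∅ := by
      by_contra hne
      exact hk (mem_piFinset_of_cube_inter_unitCube_nonempty (nonempty_iff_ne_empty.mpr hne))
    simp [hempty, hq', hp']

lemma eLpNorm_cubeInd (hq0 : q ≠ 0) (hq : q ≠ ∞) (hℓ : 0 ≤ ℓ) :
    eLpNorm (cubeInd d c ℓ) q volume = ENNReal.ofReal (ℓ ^ d) ^ (1 / q.toReal) := by
  rw [cubeInd, eLpNorm_indicator_const (measurableSet_cube d c ℓ) hq0 hq, volume_cube d c hℓ]
  simp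

lemma eLpNorm_cubeInd_ne_zero (hq0 : q ≠ 0) (hq : q ≠ ∞) (hℓ : 0 < ℓ) :
    eLpNorm (cubeInd d c ℓ) q volume ≠ 0 := by
  rw [eLpNorm_cubeInd hq0 hq hℓ.le]
  exact (ENNReal.rpow_pos (ENNReal.ofReal_pos.mpr (pow_pos hℓ d)) ENNReal.ofReal_ne_top).ne'

lemma amalgamNorm_cubeInd :
    amalgamNorm d q p (cubeInd d c ℓ) = amalgamNormE d q p ((cube d c ℓ).indicator fun _ => 1) := by
  rw [amalgamNorm, cubeInd]
  congr 1
  ext x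
  by_cases hx : x ∈ cube d c ℓ <;> simp [hx]

lemma phiOne_ne_zero (hq0 : q ≠ 0) (hq : q ≠ ∞) (hp0 : p ≠ 0) (hp : p ≠ ∞) (hℓ : 0 < ℓ) :
    phiOne d q p c ℓ ≠ 0 := by
  rw [phiOne, amalgamNorm_cubeInd]
  exact ENNReal.div_ne_zero.mpr
    ⟨amalgamNormE_indicator_cube_ne_zero hq0 hq hp0 hp hℓ, ENNReal.ofReal_ne_top⟩

lemma phiOne_ne_top (hq0 : q ≠ 0) (hq : q ≠ ∞) (hp0 : p ≠ 0) (hp : p ≠ ∞) (hℓ : 0 < ℓ) :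
    phiOne d q p c ℓ ≠ ∞ := by
  rw [phiOne, amalgamNorm_cubeInd]
  exact ENNReal.div_ne_top (amalgamNormE_indicator_cube_ne_top hq0 hq hp0 hp)
    (ENNReal.ofReal_pos.mpr (pow_pos hℓ d)).ne'

lemma rpow_mul_phiOne (hq0 : q ≠ 0) (hq : q ≠ ∞) (hℓ : 0 < ℓ) :
    ENNReal.ofReal (ℓ ^ d) ^ (1 - 1 / q.toReal) * phiOne d q p c ℓ =
      amalgamNormE d q p ((cube d c ℓ).indicator fun _ => 1) /
        eLpNorm (cubeInd d c ℓ) q volume := by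
  have hV0 : ENNReal.ofReal (ℓ ^ d) ≠ 0 := (ENNReal.ofReal_pos.mpr (pow_pos hℓ d)).ne'
  rw [phiOne, amalgamNorm_cubeInd, eLpNorm_cubeInd hq0 hq hℓ.le, ENNReal.div_eq_inv_mul,
    ENNReal.div_eq_inv_mul, ← ENNReal.rpow_neg_one, ← ENNReal.rpow_neg, mul_left_comm,
    ← mul_assoc, ← ENNReal.rpow_add _ _ hV0 ENNReal.ofReal_ne_top]
  congr 2
  ring

end Cubes

lemma IsPolyDeg.continuous {d δ : ℕ} {P : (Fin d → ℝ) → ℂ} (hP : IsPolyDeg d δ P) :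
    Continuous P := by
  obtain ⟨coef, hcoef⟩ := hP
  rw [funext hcoef]
  refine continuous_finsetSum _ fun β _ => ?_
  split_ifs <;> fun_prop

section Campanato

variable {d : ℕ} {q p r' : ℝ≥0∞} {g : (Fin d → ℝ) → ℂ} {P : (Fin d → ℝ) → ℝ → (Fin d → ℝ) → ℂ}
  {c : Fin d → ℝ} {ℓ : ℝ}

lemma inv_phiOne_mul_le_campNormLoc_of_one_le (hℓ : 0 < ℓ) (hbig : 1 ≤ ℓ ^ d) :
    (phiOne d q p c ℓ)⁻¹ * ((ENNReal.ofReal (ℓ ^ d))⁻¹ *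
      ∫⁻ x in cube d c ℓ, (‖g x‖₊ : ℝ≥0∞) ^ r'.toReal) ^ (1 / r'.toReal) ≤
      campNormLoc d q p r' g P :=
  le_add_right (le_iSup₂_of_le c ⟨ℓ, hℓ, hbig⟩ le_rfl)

lemma inv_phiOne_mul_le_campNormLoc_of_lt_one (hℓ : 0 < ℓ) (hsmall : ℓ ^ d < 1) :
    (phiOne d q p c ℓ)⁻¹ * ((ENNReal.ofReal (ℓ ^ d))⁻¹ *
      ∫⁻ x in cube d c ℓ, (‖g x - P c ℓ x‖₊ : ℝ≥0∞) ^ r'.toReal) ^ (1 / r'.toReal) ≤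
      campNormLoc d q p r' g P :=
  le_add_left (le_iSup₂_of_le c ⟨ℓ, hℓ, hsmall⟩ le_rfl)

end Campanato

namespace IsLocalAtom

variable {d δ : ℕ} {q p r r' : ℝ≥0∞} {a : (Fin d → ℝ) → ℂ} {c : Fin d → ℝ} {ℓ : ℝ}

lemma volume_ne_zero (ha : IsLocalAtom d q r δ a c ℓ) : ENNReal.ofReal (ℓ ^ d) ≠ 0 :=
  (ENNReal.ofReal_pos.mpr (pow_pos ha.1 d)).ne'

lemma memLp (ha : IsLocalAtom d q r δ a c ℓ) : MemLp a r volume :=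
  ⟨ha.2.1.aestronglyMeasurable, ha.2.2.2.1.trans_lt
    (ENNReal.rpow_ne_top_of_ne_zero ha.volume_ne_zero ENNReal.ofReal_ne_top).lt_top⟩

lemma integrable_of_integrableOn {f : (Fin d → ℝ) → ℂ} (ha : IsLocalAtom d q r δ a c ℓ)
    (hf : IntegrableOn (fun x => f x * a x) (cube d c ℓ)) : Integrable fun x => f x * a x :=
  (integrableOn_iff_integrable_of_support_subset
    ((Function.support_mul_subset_right _ _).trans ha.2.2.1)).mp hf

lemma integrable_continuous_mul (ha : IsLocalAtom d q r δ a c ℓ) (hr : 1 ≤ r)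
    {φ : (Fin d → ℝ) → ℂ} (hφ : Continuous φ) : Integrable fun x => φ x * a x := by
  obtain ⟨C, hC⟩ := (isCompact_cube d c ℓ).exists_bound_of_continuousOn hφ.continuousOn
  exact ha.integrable_of_integrableOn <| ((ha.memLp.restrict _).integrable hr).bdd_mul
    hφ.aestronglyMeasurable ((ae_restrict_iff' (measurableSet_cube d c ℓ)).mpr (ae_of_all _ hC))

lemma integrable_mul {r' : ℝ≥0∞} [ENNReal.HolderConjugate r' r] (hr' : r' ≠ ∞)
    (ha : IsLocalAtom d q r δ a c ℓ) {h : (Fin d → ℝ) → ℂ} (hh : AEStronglyMeasurable h)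
    (hloc : ∫⁻ x in cube d c ℓ, (‖h x‖₊ : ℝ≥0∞) ^ r'.toReal < ∞) :
    Integrable fun x => h x * a x := by
  have hmem : MemLp h r' (volume.restrict (cube d c ℓ)) := by
    refine ⟨hh.restrict, ?_⟩
    rw [eLpNorm_eq_lintegral_rpow_enorm_toReal (ENNReal.HolderConjugate.ne_zero r' r) hr']
    exact ENNReal.rpow_lt_top_of_nonneg (by positivity) hloc.ne
  exact ha.integrable_of_integrableOn (hmem.integrable_mul (ha.memLp.restrict _))

lemma integral_poly_mul_eq_zero (ha : IsLocalAtom d q r δ a c ℓ) (hr : 1 ≤ r)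
    (hsmall : ℓ ^ d < 1) {P : (Fin d → ℝ) → ℂ} (hP : IsPolyDeg d δ P) :
    ∫ x, P x * a x = 0 := by
  obtain ⟨coef, hcoef⟩ := hP
  have hmoment : ∀ β : Fin d → Fin (δ + 1), ∫ x, (if (∑ i, (β i : ℕ)) ≤ δ then
      coef β * ∏ i, (x i : ℂ) ^ (β i : ℕ) else 0) * a x = 0 := fun β => by
    split_ifs with hβ
    · simp only [mul_assoc, integral_const_mul, ha.2.2.2.2 hsmall (fun i => β i) hβ, mul_zero]
    · simp
  simp only [hcoef, Finset.sum_mul]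
  rw [integral_finsetSum _ fun β _ => ha.integrable_continuous_mul hr (by split_ifs <;> fun_prop)]
  exact Finset.sum_eq_zero fun β _ => hmoment β

lemma enorm_integral_mul_le {r' : ℝ≥0∞} [ENNReal.HolderConjugate r' r] (hr' : r' ≠ ∞)
    (ha : IsLocalAtom d q r δ a c ℓ) {h : (Fin d → ℝ) → ℂ} (hh : AEStronglyMeasurable h) :
    (‖∫ x, h x * a x‖₊ : ℝ≥0∞) ≤ ENNReal.ofReal (ℓ ^ d) ^ (1 - 1 / q.toReal) *
      ((ENNReal.ofReal (ℓ ^ d))⁻¹ *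
        ∫⁻ x in cube d c ℓ, (‖h x‖₊ : ℝ≥0∞) ^ r'.toReal) ^ (1 / r'.toReal) := by
  set V := ENNReal.ofReal (ℓ ^ d)
  set I := ∫⁻ x in cube d c ℓ, (‖h x‖₊ : ℝ≥0∞) ^ r'.toReal
  have hsupp : Function.support (fun x => ‖h x * a x‖ₑ) ⊆ cube d c ℓ := fun x hx =>
    ha.2.2.1 fun hax => hx (by simp [hax])
  calc (‖∫ x, h x * a x‖₊ : ℝ≥0∞)
      ≤ ∫⁻ x, ‖h x * a x‖ₑ := enorm_integral_le_lintegral_enorm _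
    _ = eLpNorm (h • a) 1 (volume.restrict (cube d c ℓ)) := by
        rw [eLpNorm_one_eq_lintegral_enorm, ← setLIntegral_eq_of_support_subset hsupp]
        rfl
    _ ≤ eLpNorm h r' (volume.restrict (cube d c ℓ)) *
          eLpNorm a r (volume.restrict (cube d c ℓ)) :=
        eLpNorm_smul_le_mul_eLpNorm ha.2.1.aestronglyMeasurable.restrict hh.restrict
    _ ≤ I ^ (1 / r'.toReal) * V ^ (1 / r.toReal - 1 / q.toReal) := by
        gcongr
        · rw [eLpNorm_eq_lintegral_rpow_enorm_toReal (ENNReal.HolderConjugate.ne_zero r' r) hr']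
          rfl
        · exact (eLpNorm_restrict_le _ _ _ _).trans ha.2.2.2.1
    _ = V ^ (1 - 1 / q.toReal) * (V⁻¹ * I) ^ (1 / r'.toReal) := by
        have hexp : 1 - 1 / q.toReal + -(1 / r'.toReal) = 1 / r.toReal - 1 / q.toReal := by
          linarith [ENNReal.HolderConjugate.one_div_toReal_add_one_div_toReal (p := r') (q := r)]
        rw [ENNReal.mul_rpow_of_nonneg _ _ (by positivity), ← mul_assoc, ENNReal.inv_rpow,
          ← ENNReal.rpow_neg, ← ENNReal.rpow_add _ _ ha.volume_ne_zero ENNReal.ofReal_ne_top,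
          hexp, mul_comm]

lemma enorm_integral_mul_le_of_inv_phiOne_mul_le [ENNReal.HolderConjugate r' r] (hr' : r' ≠ ∞)
    (hq0 : q ≠ 0) (hq : q ≠ ∞) (hp0 : p ≠ 0) (hp : p ≠ ∞) (ha : IsLocalAtom d q r δ a c ℓ)
    {h : (Fin d → ℝ) → ℂ} (hh : AEStronglyMeasurable h) {K : ℝ≥0∞}
    (hK : (phiOne d q p c ℓ)⁻¹ * ((ENNReal.ofReal (ℓ ^ d))⁻¹ *
      ∫⁻ x in cube d c ℓ, (‖h x‖₊ : ℝ≥0∞) ^ r'.toReal) ^ (1 / r'.toReal) ≤ K) :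
    (‖∫ x, h x * a x‖₊ : ℝ≥0∞) ≤
      amalgamNormE d q p ((cube d c ℓ).indicator fun _ => 1) /
        eLpNorm (cubeInd d c ℓ) q volume * K :=
  calc (‖∫ x, h x * a x‖₊ : ℝ≥0∞)
      ≤ ENNReal.ofReal (ℓ ^ d) ^ (1 - 1 / q.toReal) * ((ENNReal.ofReal (ℓ ^ d))⁻¹ *
          ∫⁻ x in cube d c ℓ, (‖h x‖₊ : ℝ≥0∞) ^ r'.toReal) ^ (1 / r'.toReal) :=
        ha.enorm_integral_mul_le hr' hh
    _ ≤ ENNReal.ofReal (ℓ ^ d) ^ (1 - 1 / q.toReal) * (phiOne d q p c ℓ * K) := by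
        gcongr
        exact (ENNReal.inv_mul_le_iff (phiOne_ne_zero hq0 hq hp0 hp ha.1)
          (phiOne_ne_top hq0 hq hp0 hp ha.1)).mp hK
    _ = _ := by rw [← mul_assoc, rpow_mul_phiOne hq0 hq ha.1]

lemma enorm_integral_mul_le_campNormLoc [ENNReal.HolderConjugate r' r] (hr' : r' ≠ ∞)
    (hq0 : q ≠ 0) (hq : q ≠ ∞) (hp0 : p ≠ 0) (hp : p ≠ ∞) (ha : IsLocalAtom d q r δ a c ℓ)
    {g : (Fin d → ℝ) → ℂ} (hg : AEStronglyMeasurable g)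
    (hgloc : ∫⁻ x in cube d c ℓ, (‖g x‖₊ : ℝ≥0∞) ^ r'.toReal < ∞)
    {P : (Fin d → ℝ) → ℝ → (Fin d → ℝ) → ℂ} (hP : IsPolyDeg d δ (P c ℓ)) :
    (‖∫ x, g x * a x‖₊ : ℝ≥0∞) ≤
      amalgamNormE d q p ((cube d c ℓ).indicator fun _ => 1) /
        eLpNorm (cubeInd d c ℓ) q volume * campNormLoc d q p r' g P := by
  by_cases hsmall : ℓ ^ d < 1
  · have hr : 1 ≤ r := ENNReal.HolderConjugate.one_le r r'
    have hsub : ∫ x, g x * a x = ∫ x, (g x - P c ℓ x) * a x := by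
      simp only [sub_mul]
      rw [integral_sub (ha.integrable_mul hr' hg hgloc)
        (ha.integrable_continuous_mul hr hP.continuous),
        ha.integral_poly_mul_eq_zero hr hsmall hP, sub_zero]
    rw [hsub]
    exact ha.enorm_integral_mul_le_of_inv_phiOne_mul_le hr' hq0 hq hp0 hp
      (hg.sub hP.continuous.aestronglyMeasurable)
      (inv_phiOne_mul_le_campNormLoc_of_lt_one ha.1 hsmall)
  · exact ha.enorm_integral_mul_le_of_inv_phiOne_mul_le hr' hq0 hq hp0 hp hg
      (inv_phiOne_mul_le_campNormLoc_of_one_le ha.1 (not_lt.mp hsmall))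

end IsLocalAtom

theorem stmt18_general (d : ℕ) (q p r r' : ℝ≥0∞) (η : ℝ) (δ : ℕ)
    (hq0 : 0 < q) (hqp : q ≤ p) (hp1 : p ≤ 1) (hr1 : 1 < r)
    (hrr' : 1 / r + 1 / r' = 1)
    (hη0 : 0 < η) (hη : η < q.toReal)
    (g : (Fin d → ℝ) → ℂ) (hg : Measurable g)
    (hgloc : ∀ (c : Fin d → ℝ) (ℓ : ℝ), 0 < ℓ →
      (∫⁻ x in cube d c ℓ, (‖g x‖₊ : ℝ≥0∞) ^ r'.toReal) < ∞)
    (P : (Fin d → ℝ) → ℝ → (Fin d → ℝ) → ℂ)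
    (hPpoly : ∀ (c : Fin d → ℝ) (ℓ : ℝ), 0 < ℓ → IsPolyDeg d δ (P c ℓ))
    (m : ℕ) (a : Fin (m + 1) → (Fin d → ℝ) → ℂ) (c : Fin (m + 1) → Fin d → ℝ)
    (ℓ : Fin (m + 1) → ℝ) (lam : Fin (m + 1) → ℂ)
    (ha : ∀ n, IsLocalAtom d q r δ (a n) (c n) (ℓ n)) :
    (‖∫ x, g x * ∑ n, lam n * a n x‖₊ : ℝ≥0∞) ≤
      (amalgamNormE d (q / ENNReal.ofReal η) (p / ENNReal.ofReal η)
        (fun x => ∑ n, ((‖lam n‖₊ : ℝ≥0∞) / eLpNorm (cubeInd d (c n) (ℓ n)) q volume) ^ η *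
          (cube d (c n) (ℓ n)).indicator (fun _ => (1 : ℝ≥0∞)) x)) ^ (1 / η) *
      campNormLoc d q p r' g P := by
  have hq1 : q ≤ 1 := hqp.trans hp1
  have hq : q ≠ ∞ := ne_top_of_le_ne_top ENNReal.one_ne_top hq1
  have hp0 : p ≠ 0 := (hq0.trans_le hqp).ne'
  have hp : p ≠ ∞ := ne_top_of_le_ne_top ENNReal.one_ne_top hp1
  have hη1 : η ≤ 1 := hη.le.trans (ENNReal.toReal_le_one_of_le_one hq1)
  have : ENNReal.HolderConjugate r' r :=
    ENNReal.holderConjugate_iff.mpr (by simpa only [one_div, add_comm] using hrr')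
  have hr' : r' ≠ ∞ := ((ENNReal.HolderConjugate.lt_top_iff_one_lt r' r).mpr hr1).ne
  calc (‖∫ x, g x * ∑ n, lam n * a n x‖₊ : ℝ≥0∞)
      ≤ ∑ n, (‖lam n‖₊ : ℝ≥0∞) * ‖∫ x, g x * a n x‖₊ :=
        enorm_integral_mul_sum_le _ _ _ fun n _ =>
          (ha n).integrable_mul hr' hg.aestronglyMeasurable (hgloc _ _ (ha n).1)
    _ ≤ ∑ n, (‖lam n‖₊ : ℝ≥0∞) / eLpNorm (cubeInd d (c n) (ℓ n)) q volume *
          amalgamNormE d q p ((cube d (c n) (ℓ n)).indicator fun _ => 1) *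
          campNormLoc d q p r' g P := by
        refine Finset.sum_le_sum fun n _ => (mul_le_mul_right
          ((ha n).enorm_integral_mul_le_campNormLoc hr' hq0.ne' hq hp0 hp hg.aestronglyMeasurable
            (hgloc _ _ (ha n).1) (hPpoly _ _ (ha n).1)) _).trans_eq ?_
        simp only [ENNReal.div_eq_inv_mul]
        ring
    _ ≤ _ := by
        rw [← Finset.sum_mul]
        gcongr
        exact sum_mul_amalgamNormE_indicator_le hq0.ne' hq1 hp0 hp1 hη0 hη1 _
          (fun n _ => measurableSet_cube _ _ _) fun n _ =>
            ENNReal.div_ne_top ENNReal.coe_ne_top (eLpNorm_cubeInd_ne_zero hq0.ne' hq (ha n).1)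

/-- Duality pairing estimate: for `0 < q ≤ p ≤ 1`, `1 < r < ∞`,
`g` in the local Campanato space `𝓛^{loc}_{r',φ₁,δ}` (with projection polynomials `P`),
and any finite linear combination `f = ∑ λ_n a_n` of local `(q,r,δ)`-atoms,
`|∫ g f| ≤ ‖∑ (|λ_n|/‖χ_{Q^n}‖_q)^η χ_{Q^n}‖_{q/η,p/η}^{1/η} · ‖g‖_{𝓛^{loc}_{r',φ₁,δ}}`. -/
theorem stmt18 (d : ℕ) (hd : 0 < d) (q p r r' : ℝ≥0∞) (η : ℝ) (δ : ℕ)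
    (hq0 : 0 < q) (hqp : q ≤ p) (hp1 : p ≤ 1) (hr1 : 1 < r) (hr2 : r < ∞)
    (hrr' : 1 / r + 1 / r' = 1)
    (hδ : ⌊(d : ℝ) * (1 / q.toReal - 1)⌋ ≤ (δ : ℤ))
    (hη0 : 0 < η) (hη : η < q.toReal)
    (g : (Fin d → ℝ) → ℂ) (hg : Measurable g)
    (hgloc : ∀ (c : Fin d → ℝ) (ℓ : ℝ), 0 < ℓ →
      (∫⁻ x in cube d c ℓ, (‖g x‖₊ : ℝ≥0∞) ^ r'.toReal) < ∞)
    (P : (Fin d → ℝ) → ℝ → (Fin d → ℝ) → ℂ)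
    (hPpoly : ∀ (c : Fin d → ℝ) (ℓ : ℝ), 0 < ℓ → IsPolyDeg d δ (P c ℓ))
    (hPorth : ∀ (c : Fin d → ℝ) (ℓ : ℝ), 0 < ℓ → ∀ Q : (Fin d → ℝ) → ℂ,
      IsPolyDeg d δ Q → ∫ x in cube d c ℓ, (g x - P c ℓ x) * Q x = 0)
    (m : ℕ) (a : Fin (m + 1) → (Fin d → ℝ) → ℂ) (c : Fin (m + 1) → Fin d → ℝ)
    (ℓ : Fin (m + 1) → ℝ) (lam : Fin (m + 1) → ℂ)
    (ha : ∀ n, IsLocalAtom d q r δ (a n) (c n) (ℓ n)) :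
    (‖∫ x, g x * ∑ n, lam n * a n x‖₊ : ℝ≥0∞) ≤
      (amalgamNormE d (q / ENNReal.ofReal η) (p / ENNReal.ofReal η)
        (fun x => ∑ n, ((‖lam n‖₊ : ℝ≥0∞) / eLpNorm (cubeInd d (c n) (ℓ n)) q volume) ^ η *
          (cube d (c n) (ℓ n)).indicator (fun _ => (1 : ℝ≥0∞)) x)) ^ (1 / η) *
      campNormLoc d q p r' g P :=
  stmt18_general d q p r r' η δ hq0 hqp hp1 hr1 hrr' hη0 hη g hg hgloc P hPpoly m a c ℓ lam ha

end
end
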